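/- arXiv:1112.4923 — 9 statements merged into one kernel-verified Lean document; each statement's English description precedes it below -/
import Mathlib

section
/- Let X be a real Hilbert space, let m ≥ 2, and let T_1, …, T_m : X → X be firmly nonexpansive mappings, each of which is asymptotically regular. Then the composition T_m ∘ T_{m−1} ∘ ⋯ ∘ T_1 is asymptotically regular. -/
open Filter Topology RealInnerProductSpace

/-- The composition `T m ∘ ⋯ ∘ T 1` (with `T 1` applied first), realized as a left fold. -/
def compFold {X : Type*} {m : ℕ} (T : Fin m → X → X) : X → X :=
  fun x => (List.ofFn T).foldl (fun y f => f y) x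

set_option linter.unusedSectionVars false
set_option linter.unusedVariables false
set_option maxHeartbeats 1000000

section Aux

variable {X : Type*} [NormedAddCommGroup X] [InnerProductSpace ℝ X]

/-- Firm nonexpansiveness. -/
def Firm (g : X → X) : Prop := ∀ x y : X, ‖g x - g y‖ ^ 2 ≤ ⟪x - y, g x - g y⟫

/-- Apply a list of maps from left to right. -/
def applyL (L : List (X → X)) (x : X) : X := L.foldl (fun y f => f y) x

@[simp] lemma applyL_nil (x : X) : applyL ([] : List (X → X)) x = x := rfl

@[simp] lemma applyL_cons (g : X → X) (L : List (X → X)) (x : X) :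
    applyL (g :: L) x = applyL L (g x) := rfl


lemma Firm.nonexp {g : X → X} (h : Firm g) (x y : X) : ‖g x - g y‖ ≤ ‖x - y‖ := by
  rcases (norm_nonneg (g x - g y)).eq_or_lt.imp_left Eq.symm with h0 | h0
  · rw [h0]; exact norm_nonneg _
  · have h1 := h x y
    have h2 := real_inner_le_norm (x - y) (g x - g y)
    nlinarith

lemma Firm.coco {g : X → X} (h : Firm g) (x y : X) :
    ‖(x - g x) - (y - g y)‖ ^ 2 ≤ ⟪x - y, (x - g x) - (y - g y)⟫ := by
  have hv : (x - g x) - (y - g y) = (x - y) - (g x - g y) := by abel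
  have hr : ⟪x - y, (x - y) - (g x - g y)⟫ = ‖x - y‖ ^ 2 - ⟪x - y, g x - g y⟫ := by
    rw [inner_sub_right, real_inner_self_eq_norm_sq]
  rw [hv, hr, norm_sub_sq_real]
  have := h x y
  linarith

lemma applyL_nonexp (L : List (X → X)) (hf : ∀ g ∈ L, Firm g) (x y : X) :
    ‖applyL L x - applyL L y‖ ≤ ‖x - y‖ := by
  induction L generalizing x y with
  | nil => simp
  | cons g L ih =>
    simp only [applyL_cons]
    exact (ih (fun g' hg' => hf g' (List.mem_cons_of_mem _ hg')) (g x) (g y)).trans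
      ((hf g (List.mem_cons_self)).nonexp x y)

private lemma real_combo {a b c d : ℝ} (n : ℕ) (ha : 0 ≤ a) (hb : 0 ≤ b)
    (h1 : a ^ 2 ≤ c) (h2 : b ^ 2 ≤ n * d) (hd : 0 ≤ d) :
    (a + b) ^ 2 ≤ (n + 1) * (c + d) := by
  rcases Nat.eq_zero_or_pos n with rfl | hn
  · have hb0 : b = 0 := by push_cast at h2; nlinarith
    subst hb0; push_cast; nlinarith
  · have hn1 : (1 : ℝ) ≤ (n : ℝ) := by exact_mod_cast hn
    nlinarith [sq_nonneg ((n : ℝ) * a - b), mul_le_mul_of_nonneg_left h1 (by positivity : (0:ℝ) ≤ (n:ℝ))]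

lemma applyL_chain (L : List (X → X)) (hf : ∀ g ∈ L, Firm g) (x y : X) :
    ‖(x - y) - (applyL L x - applyL L y)‖ ^ 2
      ≤ L.length * (‖x - y‖ ^ 2 - ‖applyL L x - applyL L y‖ ^ 2) := by
  induction L generalizing x y with
  | nil => simp
  | cons g L ih =>
    have hg : Firm g := hf g (List.mem_cons_self)
    have hfL : ∀ g' ∈ L, Firm g' := fun g' hg' => hf g' (List.mem_cons_of_mem _ hg')
    simp only [applyL_cons, List.length_cons]
    set u := applyL L (g x)
    set v := applyL L (g y)
    have hA : ‖(x - y) - (g x - g y)‖ ^ 2 ≤ ‖x - y‖ ^ 2 - ‖g x - g y‖ ^ 2 := by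
      have h1 := hg x y
      have h2 := norm_sub_sq_real (x - y) (g x - g y)
      linarith
    have hB := ih hfL (g x) (g y)
    have hsplit : (x - y) - (u - v) = ((x - y) - (g x - g y)) + ((g x - g y) - (u - v)) := by
      abel
    have hnorm : ‖(x - y) - (u - v)‖ ≤ ‖(x - y) - (g x - g y)‖ + ‖(g x - g y) - (u - v)‖ := by
      rw [hsplit]; exact norm_add_le _ _
    have hd : (0:ℝ) ≤ ‖g x - g y‖ ^ 2 - ‖u - v‖ ^ 2 := by
      have := applyL_nonexp L hfL (g x) (g y)
      nlinarith [norm_nonneg (u - v)]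
    have key : (‖(x - y) - (g x - g y)‖ + ‖(g x - g y) - (u - v)‖) ^ 2
        ≤ (L.length + 1) * ((‖x - y‖ ^ 2 - ‖g x - g y‖ ^ 2) + (‖g x - g y‖ ^ 2 - ‖u - v‖ ^ 2)) :=
      real_combo L.length (norm_nonneg _) (norm_nonneg _) hA hB hd
    have h3 : ‖(x - y) - (u - v)‖ ^ 2 ≤ (‖(x - y) - (g x - g y)‖ + ‖(g x - g y) - (u - v)‖) ^ 2 :=
      pow_le_pow_left₀ (norm_nonneg _) hnorm 2
    push_cast
    nlinarith [h3, key]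

private lemma sq_combo {a R Q : ℝ} (n : ℕ) (ha : 0 ≤ a) (hR : 0 ≤ R) (hQ : 0 ≤ Q)
    (h : R ^ 2 ≤ n * Q) : (a + R) ^ 2 ≤ (n + 1) * (a ^ 2 + Q) := by
  rcases Nat.eq_zero_or_pos n with rfl | hn
  · push_cast at h ⊢
    have hR0 : R = 0 := by nlinarith
    subst hR0; nlinarith
  · have hn1 : (1 : ℝ) ≤ (n : ℝ) := by exact_mod_cast hn
    nlinarith [sq_nonneg ((n : ℝ) * a - R), mul_le_mul_of_nonneg_left h (by positivity : (0:ℝ) ≤ (n:ℝ))]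

lemma keyInv (δ Z : ℝ) (hδ : 0 ≤ δ) (hZ : 0 ≤ Z) (L : List (X → X))
    (hf : ∀ g ∈ L, Firm g) (hz : ∀ g ∈ L, ∃ z : X, ‖z‖ ≤ Z ∧ ‖z - g z‖ ≤ δ) (x : X) :
    ∃ (v w : X) (Q R : ℝ), x - applyL L x = v + w ∧ ‖w‖ ≤ L.length * δ ∧
      0 ≤ Q ∧ 0 ≤ R ∧ ‖v‖ ≤ R ∧ R ^ 2 ≤ L.length * Q ∧
      Q / 2 + ‖v‖ ^ 2 / 2 - (L.length * δ + Z) * R ≤ ⟪v, x⟫ := by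
  induction L generalizing x with
  | nil =>
    refine ⟨0, 0, 0, 0, by simp, by simp, le_refl _, le_refl _, by simp, by simp, by simp⟩
  | cons g L ih =>
    obtain ⟨z, hzZ, hzd⟩ := hz g (List.mem_cons_self)
    have hg : Firm g := hf g (List.mem_cons_self)
    obtain ⟨v, w, Q, R, he, hw, hQ, hR, hvR, hRQ, hstar⟩ :=
      ih (fun g' h' => hf g' (List.mem_cons_of_mem _ h'))
         (fun g' h' => hz g' (List.mem_cons_of_mem _ h')) (g x)
    set n := L.length with hn
    set p : X := (x - g x) - (z - g z) with hp
    -- cocoercivity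
    have hcoco : ‖p‖ ^ 2 ≤ ⟪p, x - z⟫ := by
      have := hg.coco x z
      rwa [real_inner_comm] at this
    have hpz : ⟪p, z⟫ ≥ -(Z * ‖p‖) := by
      have h1 : |⟪p, z⟫| ≤ ‖p‖ * ‖z‖ := abs_real_inner_le_norm p z
      have h2 : ‖p‖ * ‖z‖ ≤ ‖p‖ * Z := by
        exact mul_le_mul_of_nonneg_left hzZ (norm_nonneg _)
      nlinarith [neg_abs_le ⟪p, z⟫]
    have hpx : ⟪p, x⟫ ≥ ‖p‖ ^ 2 - Z * ‖p‖ := by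
      have : ⟪p, x⟫ = ⟪p, x - z⟫ + ⟪p, z⟫ := by
        rw [← inner_add_right]; congr 1; abel
      linarith [hcoco, hpz]
    -- inner v with x
    have hxgx : x - g x = p + (z - g z) := by rw [hp]; abel
    have hvzgz : ⟪v, z - g z⟫ ≥ -(δ * R) := by
      have h1 : |⟪v, z - g z⟫| ≤ ‖v‖ * ‖z - g z‖ := abs_real_inner_le_norm _ _
      have h2 : ‖v‖ * ‖z - g z‖ ≤ R * δ := by
        exact mul_le_mul hvR hzd (norm_nonneg _) hR
      nlinarith [neg_abs_le ⟪v, z - g z⟫]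
    have hvx : ⟪v, x⟫ ≥ ⟪v, g x⟫ + ⟪v, p⟫ - δ * R := by
      have h1 : ⟪v, x⟫ = ⟪v, g x⟫ + ⟪v, p⟫ + ⟪v, z - g z⟫ := by
        rw [← inner_add_right, ← inner_add_right]; congr 1
        rw [hp]; abel
      linarith [hvzgz]
    refine ⟨p + v, (z - g z) + w, ‖p‖ ^ 2 + Q, ‖p‖ + R, ?_, ?_, by positivity,
      by positivity, ?_, ?_, ?_⟩
    · -- decomposition
      have h1 : x - applyL (g :: L) x = (x - g x) + (g x - applyL L (g x)) := by
        simp only [applyL_cons]; abel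
      rw [h1, he, hxgx]; abel
    · -- norm of w part
      calc ‖(z - g z) + w‖ ≤ ‖z - g z‖ + ‖w‖ := norm_add_le _ _
        _ ≤ δ + n * δ := add_le_add hzd hw
        _ = (n + 1) * δ := by ring
        _ = ((g :: L).length : ℝ) * δ := by rw [List.length_cons]; push_cast; ring
    · calc ‖p + v‖ ≤ ‖p‖ + ‖v‖ := norm_add_le _ _
        _ ≤ ‖p‖ + R := by linarith
    · -- R² ≤ (n+1) Q
      have := sq_combo n (norm_nonneg p) hR hQ hRQ
      simpa [List.length_cons] using this
    · -- the inner product inequality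
      have hexp : ‖p + v‖ ^ 2 = ‖p‖ ^ 2 + 2 * ⟪p, v⟫ + ‖v‖ ^ 2 := norm_add_sq_real p v
      have hinner : ⟪p + v, x⟫ = ⟪p, x⟫ + ⟪v, x⟫ := inner_add_left _ _ _
      have hcomm : ⟪v, p⟫ = ⟪p, v⟫ := real_inner_comm p v
      have hlen : ((g :: L).length : ℝ) = (n : ℝ) + 1 := by rw [List.length_cons]; push_cast; ring
      rw [hlen, hinner, hexp]
      have hδp : 0 ≤ ((n : ℝ) + 1) * δ * ‖p‖ := by positivity
      nlinarith [hpx, hvx, hstar, hδp]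

lemma exists_approx [CompleteSpace X] {m : ℕ} (hm : 1 ≤ m) (T : Fin m → X → X)
    (hf : ∀ i, Firm (T i))
    (hap : ∀ δ : ℝ, 0 < δ → ∀ i, ∃ z : X, ‖z - T i z‖ ≤ δ) (x₀ : X) :
    ∀ ε : ℝ, 0 < ε → ∃ y : X, ‖y - applyL (List.ofFn T) y‖ ≤ ε := by
  intro ε hε
  haveI : Nonempty X := ⟨x₀⟩
  set L : List (X → X) := List.ofFn T with hL
  have hfL : ∀ g ∈ L, Firm g := by
    intro g hg
    rw [hL, List.mem_ofFn] at hg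
    obtain ⟨i, rfl⟩ := hg
    exact hf i
  have hlen : (L.length : ℝ) = (m : ℝ) := by rw [hL, List.length_ofFn]
  have hm0 : (0:ℝ) < (m:ℝ) := by exact_mod_cast hm
  set δ : ℝ := ε / (4 * m) with hδdef
  have hδ : 0 < δ := by positivity
  choose z hz using hap δ hδ
  set Z : ℝ := ∑ i, ‖z i‖ with hZdef
  have hZ : 0 ≤ Z := Finset.sum_nonneg fun i _ => norm_nonneg _
  have hzZ : ∀ i, ‖z i‖ ≤ Z := fun i =>
    Finset.single_le_sum (f := fun i => ‖z i‖) (fun j _ => norm_nonneg _) (Finset.mem_univ i)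
  have hzL : ∀ g ∈ L, ∃ z' : X, ‖z'‖ ≤ Z ∧ ‖z' - g z'‖ ≤ δ := by
    intro g hg
    rw [hL, List.mem_ofFn] at hg
    obtain ⟨i, rfl⟩ := hg
    exact ⟨z i, hzZ i, hz i⟩
  -- choose N
  set N : ℕ := ⌈m * (m * δ + Z) ^ 2 / ε ^ 2⌉₊ + 1 with hNdef
  have hN1 : (1:ℝ) ≤ (N:ℝ) := by exact_mod_cast (Nat.le_add_left 1 _ : 1 ≤ N)
  have hNbig : m * (m * δ + Z) ^ 2 ≤ ((N:ℝ) - 1) * ε ^ 2 := by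
    have h1 : m * (m * δ + Z) ^ 2 / ε ^ 2 ≤ (⌈m * (m * δ + Z) ^ 2 / ε ^ 2⌉₊ : ℝ) := Nat.le_ceil _
    have h2 : ((⌈m * (m * δ + Z) ^ 2 / ε ^ 2⌉₊ : ℝ)) = (N:ℝ) - 1 := by
      rw [hNdef]; push_cast; ring
    rw [← h2]
    rw [div_le_iff₀ (by positivity)] at h1
    linarith
  -- the contraction
  set S : X → X := applyL L with hS
  have hSne : ∀ a b : X, ‖S a - S b‖ ≤ ‖a - b‖ := fun a b => applyL_nonexp L hfL a b
  set c : ℝ := (N:ℝ) / ((N:ℝ) + 1) with hc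
  have hc0 : 0 ≤ c := by positivity
  have hc1 : c < 1 := by rw [hc]; rw [div_lt_one (by linarith)]; linarith
  set K : NNReal := ⟨c, hc0⟩ with hK
  have hK1 : K < 1 := by
    rw [← NNReal.coe_lt_coe]; exact hc1
  set Φ : X → X := fun p => c • S p with hΦdef
  have hΦ : LipschitzWith K Φ := by
    apply LipschitzWith.of_dist_le_mul
    intro a b
    have h1 : Φ a - Φ b = c • (S a - S b) := by rw [hΦdef]; simp [smul_sub]
    rw [dist_eq_norm, dist_eq_norm, h1, norm_smul]
    have : ‖c‖ = c := by rw [Real.norm_eq_abs, abs_of_nonneg hc0]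
    rw [this]
    have hKc : (K : ℝ) = c := rfl
    rw [hKc]
    exact mul_le_mul_of_nonneg_left (hSne a b) hc0
  have hC : ContractingWith K Φ := ⟨hK1, hΦ⟩
  set y : X := ContractingWith.fixedPoint Φ hC with hy
  have hfix : Φ y = y := hC.fixedPoint_isFixedPt
  refine ⟨y, ?_⟩
  set e : X := y - S y with he
  -- key identity : N • e = -y
  have hkey : (N:ℝ) • e = -y := by
    have h1 : c • S y = y := hfix
    have h3 : ((N:ℝ) + 1) • (c • S y) = (N:ℝ) • S y := by
      rw [smul_smul]
      congr 1
      rw [hc]; field_simp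
    have h2 : ((N:ℝ) + 1) • y = (N:ℝ) • S y := by
      conv_lhs => rw [← h1]
      exact h3
    rw [he, smul_sub, ← h2, add_smul, one_smul]
    abel
  have hyNe : y = -((N:ℝ) • e) := by rw [hkey, neg_neg]
  have hey : ⟪e, y⟫ = -((N:ℝ) * ‖e‖ ^ 2) := by
    rw [hyNe, inner_neg_right, real_inner_smul_right, real_inner_self_eq_norm_sq]
  have hyn : ‖y‖ = (N:ℝ) * ‖e‖ := by
    rw [hyNe, norm_neg, norm_smul, Real.norm_eq_abs, abs_of_nonneg (by positivity)]
  -- apply keyInv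
  obtain ⟨v, w, Q, R, hvw, hw, hQ, hR, hvR, hRQ, hstar⟩ :=
    keyInv δ Z hδ.le hZ L hfL hzL y
  rw [hlen] at hw hRQ hstar
  have hevw : e = v + w := by rw [he, hS]; exact hvw
  have hinner : ⟪e, y⟫ = ⟪v, y⟫ + ⟪w, y⟫ := by rw [hevw, inner_add_left]
  have hwy : ⟪w, y⟫ ≥ -(m * δ * ‖y‖) := by
    have h1 : |⟪w, y⟫| ≤ ‖w‖ * ‖y‖ := abs_real_inner_le_norm _ _
    have h2 : ‖w‖ * ‖y‖ ≤ m * δ * ‖y‖ := mul_le_mul_of_nonneg_right hw (norm_nonneg _)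
    nlinarith [neg_abs_le ⟪w, y⟫]
  set t : ℝ := ‖e‖ with ht
  have ht0 : 0 ≤ t := norm_nonneg _
  rw [hyn] at hwy
  have hmain : Q / 2 + ‖v‖ ^ 2 / 2 - (↑m * δ + Z) * R ≤ -((N:ℝ) * t ^ 2) + ↑m * δ * ((N:ℝ) * t) := by
    linarith [hstar, hinner, hwy, hey]
  have hmδ : (m:ℝ) * δ = ε / 4 := by
    rw [hδdef]; field_simp
  have e1 : Q / 2 + ((N:ℝ) * t ^ 2 - ↑m * δ * ((N:ℝ) * t)) ≤ (↑m * δ + Z) * R := by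
    nlinarith [hmain, sq_nonneg ‖v‖]
  have e2 : 2 * ↑m * (Q / 2 + ((N:ℝ) * t ^ 2 - ↑m * δ * ((N:ℝ) * t)))
      ≤ 2 * ↑m * ((↑m * δ + Z) * R) :=
    mul_le_mul_of_nonneg_left e1 (by positivity)
  have hq' : 2 * ↑m * ((↑m * δ + Z) * R) - R ^ 2 ≤ (↑m:ℝ) ^ 2 * (↑m * δ + Z) ^ 2 := by
    nlinarith [sq_nonneg (R - ↑m * (↑m * δ + Z))]
  have e3 : R ^ 2 ≤ 2 * ↑m * (Q / 2) := by nlinarith [hRQ]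
  have hfinal : 2 * ↑m * ((N:ℝ) * t ^ 2 - ↑m * δ * ((N:ℝ) * t))
      ≤ (↑m:ℝ) ^ 2 * (↑m * δ + Z) ^ 2 := by
    linarith [e2, hq', e3]
  rw [hmδ] at hfinal hNbig
  by_contra hcon
  push_neg at hcon
  have h4 : (0:ℝ) ≤ ↑m * ((N:ℝ) * ((t - ε) * (t + 3 / 4 * ε))) :=
    mul_nonneg hm0.le (mul_nonneg (by positivity) (mul_nonneg (by linarith) (by linarith)))
  have hNb2 : (↑m:ℝ) * (↑m * (ε / 4 + Z) ^ 2) ≤ ↑m * (((N:ℝ) - 1) * ε ^ 2) :=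
    mul_le_mul_of_nonneg_left hNbig hm0.le
  have hpos : (0:ℝ) < ↑m * ε ^ 2 := by positivity
  have hNN : (0:ℝ) ≤ ↑m * ↑N * ε ^ 2 := by positivity
  linarith [hfinal, hNb2, h4, hpos, hNN]

end Aux


theorem composition_of_asymptotically_regular_firmly_nonexpansive_is_asymptotically_regular
    {X : Type*} [NormedAddCommGroup X] [InnerProductSpace ℝ X] [CompleteSpace X]
    {m : ℕ} (hm : 2 ≤ m) (T : Fin m → X → X)
    (hfirm : ∀ i : Fin m, ∀ x y : X, ‖T i x - T i y‖ ^ 2 ≤ ⟪x - y, T i x - T i y⟫)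
    (hreg : ∀ i : Fin m, ∀ x : X,
      Tendsto (fun n : ℕ => (T i)^[n] x - (T i)^[n + 1] x) atTop (𝓝 0)) :
    ∀ x : X,
      Tendsto (fun n : ℕ => (compFold T)^[n] x - (compFold T)^[n + 1] x) atTop (𝓝 0) := by
  intro x
  set L : List (X → X) := List.ofFn T with hL
  have hfL : ∀ g ∈ L, Firm g := by
    intro g hg
    rw [hL, List.mem_ofFn] at hg
    obtain ⟨i, rfl⟩ := hg
    exact hfirm i
  set S : X → X := compFold T with hS
  have hSL : ∀ p : X, S p = applyL L p := fun p => rfl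
  have hm1 : 1 ≤ m := le_trans one_le_two hm
  have hap : ∀ δ : ℝ, 0 < δ → ∀ i, ∃ z : X, ‖z - T i z‖ ≤ δ := by
    intro δ hδ i
    have h := hreg i x
    rw [NormedAddCommGroup.tendsto_nhds_zero] at h
    obtain ⟨n, hn⟩ := (h δ hδ).exists
    refine ⟨(T i)^[n] x, ?_⟩
    rw [Function.iterate_succ_apply'] at hn
    exact le_of_lt hn
  have happrox : ∀ ε : ℝ, 0 < ε → ∃ y : X, ‖y - S y‖ ≤ ε := by
    intro ε hε
    obtain ⟨y, hy⟩ := exists_approx hm1 T (fun i => hfirm i) hap x ε hε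
    exact ⟨y, by rw [hSL]; exact hy⟩
  have hnel : (L.length : ℝ) = (m : ℝ) := by rw [hL, List.length_ofFn]
  -- iterates are nonexpansive
  have hiter : ∀ (a b : X) (n : ℕ), ‖S^[n] a - S^[n] b‖ ≤ ‖a - b‖ := by
    intro a b n
    induction n with
    | zero => simp
    | succ k ih =>
      rw [Function.iterate_succ_apply', Function.iterate_succ_apply']
      calc ‖S (S^[k] a) - S (S^[k] b)‖ ≤ ‖S^[k] a - S^[k] b‖ := by
            rw [hSL, hSL]; exact applyL_nonexp L hfL _ _
        _ ≤ ‖a - b‖ := ih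
  rw [NormedAddCommGroup.tendsto_nhds_zero]
  intro ε hε
  obtain ⟨y, hy⟩ := happrox (ε / 3) (by positivity)
  set c : ℕ → X := fun n => S^[n] x - S^[n] y with hc
  have hmono : ∀ n, ‖c (n + 1)‖ ≤ ‖c n‖ := by
    intro n
    show ‖S^[n+1] x - S^[n+1] y‖ ≤ ‖S^[n] x - S^[n] y‖
    rw [Function.iterate_succ_apply', Function.iterate_succ_apply', hSL, hSL]
    exact applyL_nonexp L hfL _ _
  have hchain : ∀ n, ‖c n - c (n + 1)‖ ^ 2 ≤ (m : ℝ) * (‖c n‖ ^ 2 - ‖c (n + 1)‖ ^ 2) := by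
    intro n
    have h := applyL_chain L hfL (S^[n] x) (S^[n] y)
    rw [hnel] at h
    have hx1 : applyL L (S^[n] x) = S^[n + 1] x := by
      rw [Function.iterate_succ_apply', hSL]
    have hy1 : applyL L (S^[n] y) = S^[n + 1] y := by
      rw [Function.iterate_succ_apply', hSL]
    rw [hx1, hy1] at h
    have hcc : c n - c (n + 1) = (S^[n] x - S^[n] y) - (S^[n + 1] x - S^[n + 1] y) := by
      show (S^[n] x - S^[n] y) - (S^[n+1] x - S^[n+1] y) = _
      rfl
    rw [hcc]
    exact h
  set A : ℕ → ℝ := fun n => ‖c n‖ ^ 2 with hA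
  have hA_anti : Antitone A := antitone_nat_of_succ_le fun n =>
    pow_le_pow_left₀ (norm_nonneg _) (hmono n) 2
  have hbdd : BddBelow (Set.range A) := by
    refine ⟨0, ?_⟩
    rintro r ⟨n, rfl⟩
    positivity
  have htend : Tendsto A atTop (𝓝 (⨅ n, A n)) := tendsto_atTop_ciInf hA_anti hbdd
  have htend2 : Tendsto (fun n => A (n + 1)) atTop (𝓝 (⨅ n, A n)) :=
    htend.comp (tendsto_add_atTop_nat 1)
  have hdiff : Tendsto (fun n => A n - A (n + 1)) atTop (𝓝 0) := by
    have := htend.sub htend2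
    simpa using this
  have hcd : Tendsto (fun n => ‖c n - c (n + 1)‖) atTop (𝓝 0) := by
    have hb : ∀ n, ‖c n - c (n + 1)‖ ≤ Real.sqrt ((m : ℝ) * (A n - A (n + 1))) := by
      intro n
      rw [show ((m:ℝ) * (A n - A (n+1))) = (m : ℝ) * (‖c n‖ ^ 2 - ‖c (n+1)‖ ^ 2) from rfl]
      have hnn : (0:ℝ) ≤ (m : ℝ) * (‖c n‖ ^ 2 - ‖c (n+1)‖ ^ 2) := by
        have h1 := hmono n
        have h2 := pow_le_pow_left₀ (norm_nonneg (c (n+1))) h1 2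
        have h3 : (0:ℝ) ≤ (m:ℝ) := Nat.cast_nonneg m
        nlinarith
      rw [Real.le_sqrt (norm_nonneg _)]
      · exact hchain n
      · exact hnn
    have hsq : Tendsto (fun n => Real.sqrt ((m : ℝ) * (A n - A (n + 1)))) atTop (𝓝 0) := by
      have h1 : Tendsto (fun n => (m : ℝ) * (A n - A (n + 1))) atTop (𝓝 0) := by
        simpa using hdiff.const_mul (m : ℝ)
      have h2 := (Real.continuous_sqrt.tendsto 0).comp h1
      rw [Real.sqrt_zero] at h2
      exact h2
    exact squeeze_zero (fun n => norm_nonneg _) hb hsq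
  have hev : ∀ᶠ n in atTop, ‖c n - c (n + 1)‖ < ε / 3 := by
    have := Metric.tendsto_atTop.mp hcd (ε / 3) (by positivity)
    obtain ⟨N, hN⟩ := this
    refine eventually_atTop.mpr ⟨N, fun n hn => ?_⟩
    have := hN n hn
    rwa [Real.dist_eq, sub_zero, abs_of_nonneg (norm_nonneg _)] at this
  filter_upwards [hev] with n hn
  have hsplit : S^[n] x - S^[n + 1] x = (c n - c (n + 1)) + (S^[n] y - S^[n + 1] y) := by
    show S^[n] x - S^[n + 1] x =
      ((S^[n] x - S^[n] y) - (S^[n+1] x - S^[n+1] y)) + (S^[n] y - S^[n + 1] y)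
    abel
  have hyb : ‖S^[n] y - S^[n + 1] y‖ ≤ ε / 3 := by
    have h1 : S^[n + 1] y = S^[n] (S y) := Function.iterate_succ_apply S n y
    rw [h1]
    exact le_trans (hiter y (S y) n) hy
  calc ‖S^[n] x - S^[n + 1] x‖
      ≤ ‖c n - c (n + 1)‖ + ‖S^[n] y - S^[n + 1] y‖ := by rw [hsplit]; exact norm_add_le _ _
    _ < ε / 3 + ε / 3 := by linarith [hyb, hn]
    _ < ε := by linarith
end

section
/- Let X be a real Hilbert space, let m ≥ 2, let T_1, …, T_m : X → X be firmly nonexpansive mappings, each of which is asymptotically regular, and let λ_1, …, λ_m ∈ (0,1) with λ_1 + ⋯ + λ_m = 1. Then the convex combination x ↦ Σ_{i=1}^m λ_i T_i x is asymptotically regular. -/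
open Filter Topology RealInnerProductSpace

section Aux

variable {X : Type*} [NormedAddCommGroup X] [InnerProductSpace ℝ X]

lemma aux_jensen_norm_sq {m : ℕ} (w : Fin m → ℝ) (v : Fin m → X)
    (hw : ∀ i, 0 ≤ w i) (hsum : ∑ i, w i = 1) :
    ‖∑ i, w i • v i‖ ^ 2 ≤ ∑ i, w i * ‖v i‖ ^ 2 := by
  have h1 : ‖∑ i, w i • v i‖ ≤ ∑ i, w i * ‖v i‖ := by
    calc ‖∑ i, w i • v i‖ ≤ ∑ i, ‖w i • v i‖ := norm_sum_le _ _
      _ = ∑ i, w i * ‖v i‖ := by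
          refine Finset.sum_congr rfl fun i _ => ?_
          rw [norm_smul, Real.norm_of_nonneg (hw i)]
  have h2 : (∑ i, w i * ‖v i‖) ^ 2 ≤ ∑ i, w i * ‖v i‖ ^ 2 := by
    have := (Even.convexOn_pow (𝕜 := ℝ) even_two).map_sum_le
      (t := Finset.univ) (w := w) (p := fun i => ‖v i‖)
      (fun i _ => hw i) hsum (fun i _ => Set.mem_univ _)
    simpa [smul_eq_mul] using this
  calc ‖∑ i, w i • v i‖ ^ 2 ≤ (∑ i, w i * ‖v i‖) ^ 2 :=
        pow_le_pow_left₀ (norm_nonneg _) h1 2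
    _ ≤ ∑ i, w i * ‖v i‖ ^ 2 := h2

/-- If `S` is firmly nonexpansive then so is `Id - S`. -/
lemma aux_firm_compl (S : X → X)
    (h : ∀ x y : X, ‖S x - S y‖ ^ 2 ≤ ⟪x - y, S x - S y⟫) (x y : X) :
    ‖(x - S x) - (y - S y)‖ ^ 2 ≤ ⟪x - y, (x - S x) - (y - S y)⟫ := by
  have h1 := h x y
  have e1 : (x - S x) - (y - S y) = (x - y) - (S x - S y) := by abel
  rw [e1, inner_sub_right, real_inner_self_eq_norm_sq]
  have e2 : ‖(x - y) - (S x - S y)‖ ^ 2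
      = ‖x - y‖ ^ 2 - 2 * ⟪x - y, S x - S y⟫ + ‖S x - S y‖ ^ 2 :=
    norm_sub_sq_real _ _
  linarith

lemma aux_nonexp (S : X → X)
    (h : ∀ x y : X, ‖S x - S y‖ ^ 2 ≤ ⟪x - y, S x - S y⟫) (p q : X) :
    ‖S p - S q‖ ≤ ‖p - q‖ := by
  have h1 := h p q
  have h2 := real_inner_le_norm (p - q) (S p - S q)
  nlinarith [norm_nonneg (S p - S q), norm_nonneg (p - q)]

lemma aux_descent (S : X → X)
    (h : ∀ x y : X, ‖S x - S y‖ ^ 2 ≤ ⟪x - y, S x - S y⟫) (p q : X) :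
    ‖S p - S q‖ ^ 2 + ‖(p - S p) - (q - S q)‖ ^ 2 ≤ ‖p - q‖ ^ 2 := by
  have h1 := h p q
  have e1 : (p - S p) - (q - S q) = (p - q) - (S p - S q) := by abel
  have e2 : ‖(p - q) - (S p - S q)‖ ^ 2
      = ‖p - q‖ ^ 2 - 2 * ⟪p - q, S p - S q⟫ + ‖S p - S q‖ ^ 2 :=
    norm_sub_sq_real _ _
  rw [e1, e2]
  linarith

/-- The convex combination of firmly nonexpansive maps is firmly nonexpansive. -/
lemma aux_comb_firm {m : ℕ} (T : Fin m → X → X)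
    (hfirm : ∀ i : Fin m, ∀ x y : X, ‖T i x - T i y‖ ^ 2 ≤ ⟪x - y, T i x - T i y⟫)
    (lam : Fin m → ℝ) (hlam : ∀ i, lam i ∈ Set.Ioo (0 : ℝ) 1) (hsum : ∑ i, lam i = 1)
    (x y : X) :
    ‖(∑ i, lam i • T i x) - ∑ i, lam i • T i y‖ ^ 2
      ≤ ⟪x - y, (∑ i, lam i • T i x) - ∑ i, lam i • T i y⟫ := by
  have e : (∑ i, lam i • T i x) - ∑ i, lam i • T i y
      = ∑ i, lam i • (T i x - T i y) := by
    rw [← Finset.sum_sub_distrib]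
    exact Finset.sum_congr rfl fun i _ => (smul_sub _ _ _).symm
  rw [e]
  calc ‖∑ i, lam i • (T i x - T i y)‖ ^ 2
      ≤ ∑ i, lam i * ‖T i x - T i y‖ ^ 2 :=
        aux_jensen_norm_sq lam _ (fun i => (hlam i).1.le) hsum
    _ ≤ ∑ i, lam i * ⟪x - y, T i x - T i y⟫ :=
        Finset.sum_le_sum fun i _ =>
          mul_le_mul_of_nonneg_left (hfirm i x y) (hlam i).1.le
    _ = ⟪x - y, ∑ i, lam i • (T i x - T i y)⟫ := by
        rw [inner_sum]
        exact Finset.sum_congr rfl fun i _ => (real_inner_smul_right _ _ _).symm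

end Aux

section Main

variable {X : Type*} [NormedAddCommGroup X] [InnerProductSpace ℝ X] [CompleteSpace X]

/-- Approximate zeros of `Id - S` exist (Brezis–Haraux style argument). -/
lemma aux_approx {m : ℕ} (T : Fin m → X → X)
    (hfirm : ∀ i : Fin m, ∀ x y : X, ‖T i x - T i y‖ ^ 2 ≤ ⟪x - y, T i x - T i y⟫)
    (hreg : ∀ i : Fin m, ∀ x : X,
      Tendsto (fun n : ℕ => (T i)^[n] x - (T i)^[n + 1] x) atTop (𝓝 0))
    (lam : Fin m → ℝ) (hlam : ∀ i, lam i ∈ Set.Ioo (0 : ℝ) 1) (hsum : ∑ i, lam i = 1)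
    {δ : ℝ} (hδ : 0 < δ) :
    ∃ z : X, ‖z - ∑ i, lam i • T i z‖ ≤ δ := by
  set S : X → X := fun z => ∑ i, lam i • T i z with hS
  have hSfirm : ∀ x y : X, ‖S x - S y‖ ^ 2 ≤ ⟪x - y, S x - S y⟫ :=
    fun x y => aux_comb_firm T hfirm lam hlam hsum x y
  have hSnon : ∀ x y : X, ‖S x - S y‖ ≤ ‖x - y‖ := aux_nonexp S hSfirm
  -- approximate zeros for each T i
  have hz : ∀ i : Fin m, ∃ z : X, ‖z - T i z‖ ≤ δ / 2 := by
    intro i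
    obtain ⟨N, hN⟩ := (Metric.tendsto_atTop.mp (hreg i 0)) (δ / 2) (by positivity)
    refine ⟨(T i)^[N] 0, ?_⟩
    have h := hN N le_rfl
    rw [dist_zero_right] at h
    rw [← Function.iterate_succ_apply' (T i) N 0]
    exact h.le
  choose z hz using hz
  set C : ℝ := ∑ i, lam i * (‖z i‖ ^ 2 / 4) with hCdef
  have hC0 : 0 ≤ C :=
    Finset.sum_nonneg fun i _ => mul_nonneg (hlam i).1.le (by positivity)
  set ε : ℝ := δ ^ 2 / (2 * C + 1) with hεdef
  have hε : 0 < ε := by positivity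
  have h1ε : (0:ℝ) < 1 + ε := by linarith
  set K : NNReal := ⟨(1 + ε)⁻¹, by positivity⟩ with hKdef
  have hK1 : K < 1 := by
    rw [← NNReal.coe_lt_coe]
    show (1 + ε)⁻¹ < 1
    rw [inv_lt_one_iff₀]
    right; linarith
  set F : X → X := fun x => (1 + ε)⁻¹ • S x with hF
  have hlip : LipschitzWith K F := by
    apply LipschitzWith.of_dist_le_mul
    intro x y
    rw [dist_eq_norm, dist_eq_norm]
    have e : F x - F y = (1 + ε)⁻¹ • (S x - S y) := by simp [hF, smul_sub]
    rw [e, norm_smul, Real.norm_of_nonneg (by positivity)]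
    exact mul_le_mul_of_nonneg_left (hSnon x y) (by positivity)
  have hcontr : ContractingWith K F := ⟨hK1, hlip⟩
  haveI : Nonempty X := ⟨0⟩
  set xb : X := hcontr.fixedPoint F with hxb
  have hfix : F xb = xb := hcontr.fixedPoint_isFixedPt
  have hSxb : S xb = (1 + ε) • xb := by
    have h := congrArg (fun w : X => (1 + ε) • w) hfix
    simp only [hF] at h
    rw [smul_smul, mul_inv_cancel₀ (ne_of_gt h1ε), one_smul] at h
    exact h
  have hxbS : xb - S xb = -(ε • xb) := by
    rw [hSxb, add_smul, one_smul]; abel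
  -- key estimate per index
  have hterm : ∀ i : Fin m, ⟪xb - T i xb, -xb⟫ ≤ ‖z i‖ ^ 2 / 4 + (δ / 2) * ‖xb‖ := by
    intro i
    have hAfirm := aux_firm_compl (T i) (hfirm i) (z i) xb
    set u : X := (z i - T i (z i)) - (xb - T i xb) with hu
    have h2 : ‖u‖ ^ 2 ≤ ⟪u, z i⟫ - ⟪u, xb⟫ := by
      rw [real_inner_comm, inner_sub_right] at hAfirm
      exact hAfirm
    have h3 : ⟪u, z i⟫ ≤ ‖u‖ * ‖z i‖ := real_inner_le_norm _ _
    have h4 : ⟪u, xb⟫ ≤ ‖z i‖ ^ 2 / 4 := by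
      nlinarith [norm_nonneg u, norm_nonneg (z i), sq_nonneg (‖u‖ - ‖z i‖ / 2)]
    have e1 : ⟪xb - T i xb, -xb⟫ = ⟪u, xb⟫ - ⟪z i - T i (z i), xb⟫ := by
      rw [hu]
      simp only [inner_sub_left, inner_neg_right]
      ring
    have h5 : -⟪z i - T i (z i), xb⟫ ≤ (δ / 2) * ‖xb‖ := by
      have ha := abs_real_inner_le_norm (z i - T i (z i)) xb
      have hb : ‖z i - T i (z i)‖ * ‖xb‖ ≤ (δ / 2) * ‖xb‖ :=
        mul_le_mul_of_nonneg_right (hz i) (norm_nonneg _)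
      have := neg_abs_le (⟪z i - T i (z i), xb⟫ : ℝ)
      linarith
    rw [e1]
    linarith
  -- sum it up
  have lhs_eq : ε * ‖xb‖ ^ 2 = ⟪xb - S xb, -xb⟫ := by
    rw [hxbS]
    simp [real_inner_smul_left, real_inner_self_eq_norm_sq]
  have hsplit : xb - S xb = ∑ i, lam i • (xb - T i xb) := by
    have hxid : xb = ∑ i, lam i • xb := by
      rw [← Finset.sum_smul, hsum, one_smul]
    calc xb - S xb = (∑ i, lam i • xb) - ∑ i, lam i • T i xb := by rw [← hxid]
      _ = ∑ i, lam i • (xb - T i xb) := by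
          rw [← Finset.sum_sub_distrib]
          exact Finset.sum_congr rfl fun i _ => (smul_sub _ _ _).symm
  have key : ε * ‖xb‖ ^ 2 ≤ C + (δ / 2) * ‖xb‖ := by
    rw [lhs_eq, hsplit, sum_inner]
    calc (∑ i, ⟪lam i • (xb - T i xb), -xb⟫)
        = ∑ i, lam i * ⟪xb - T i xb, -xb⟫ :=
          Finset.sum_congr rfl fun i _ => real_inner_smul_left _ _ _
      _ ≤ ∑ i, lam i * (‖z i‖ ^ 2 / 4 + (δ / 2) * ‖xb‖) :=
          Finset.sum_le_sum fun i _ =>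
            mul_le_mul_of_nonneg_left (hterm i) (hlam i).1.le
      _ = C + (δ / 2) * ‖xb‖ := by
          simp only [mul_add, Finset.sum_add_distrib, ← Finset.sum_mul, hsum, hCdef]
          ring
  -- conclude ε * ‖xb‖ ≤ δ
  have h2Cε : 2 * C * ε ≤ δ ^ 2 := by
    have hεq : ε * (2 * C + 1) = δ ^ 2 := by
      rw [hεdef]; field_simp
    nlinarith [hε.le, hC0]
  have hfin : ε * ‖xb‖ ≤ δ := by
    by_contra hcon
    push_neg at hcon
    have ht : 0 < ‖xb‖ := by
      rcases lt_or_ge 0 ‖xb‖ with h | h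
      · exact h
      · exfalso
        have : ‖xb‖ = 0 := le_antisymm h (norm_nonneg _)
        rw [this, mul_zero] at hcon; linarith
    nlinarith [key, hcon, ht, hε, hC0]
  refine ⟨xb, ?_⟩
  have : ‖xb - S xb‖ = ε * ‖xb‖ := by
    rw [hxbS, norm_neg, norm_smul, Real.norm_of_nonneg hε.le]
  show ‖xb - S xb‖ ≤ δ
  calc ‖xb - S xb‖ = ε * ‖xb‖ := this
    _ ≤ δ := hfin

end Main

theorem convex_combination_of_asymptotically_regular_firmly_nonexpansive_is_asymptotically_regular
    {X : Type*} [NormedAddCommGroup X] [InnerProductSpace ℝ X] [CompleteSpace X]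
    {m : ℕ} (hm : 2 ≤ m) (T : Fin m → X → X)
    (hfirm : ∀ i : Fin m, ∀ x y : X, ‖T i x - T i y‖ ^ 2 ≤ ⟪x - y, T i x - T i y⟫)
    (hreg : ∀ i : Fin m, ∀ x : X,
      Tendsto (fun n : ℕ => (T i)^[n] x - (T i)^[n + 1] x) atTop (𝓝 0))
    (lam : Fin m → ℝ) (hlam : ∀ i, lam i ∈ Set.Ioo (0 : ℝ) 1) (hsum : ∑ i, lam i = 1) :
    ∀ x : X,
      Tendsto
        (fun n : ℕ =>
          (fun z : X => ∑ i, lam i • T i z)^[n] x -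
            (fun z : X => ∑ i, lam i • T i z)^[n + 1] x)
        atTop (𝓝 0) := by
  intro x
  set S : X → X := fun z => ∑ i, lam i • T i z with hS
  have hSfirm : ∀ p q : X, ‖S p - S q‖ ^ 2 ≤ ⟪p - q, S p - S q⟫ :=
    fun p q => aux_comb_firm T hfirm lam hlam hsum p q
  have hSnon : ∀ p q : X, ‖S p - S q‖ ≤ ‖p - q‖ := aux_nonexp S hSfirm
  rw [NormedAddCommGroup.tendsto_nhds_zero]
  intro ε hε
  obtain ⟨w, hw⟩ := aux_approx T hfirm hreg lam hlam hsum (δ := ε / 3) (by positivity)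
  replace hw : ‖w - S w‖ ≤ ε / 3 := hw
  set a : ℕ → X := fun n => S^[n] x - S^[n + 1] x with ha
  set b : ℕ → X := fun n => S^[n] w - S^[n + 1] w with hb
  have hiter : ∀ (p : X) (n : ℕ), S^[n + 1] p = S (S^[n] p) :=
    fun p n => Function.iterate_succ_apply' S n p
  have hamono : ∀ n, ‖a (n + 1)‖ ≤ ‖a n‖ := by
    intro n
    have e : a (n + 1) = S (S^[n] x) - S (S^[n + 1] x) := by
      show S^[n + 1] x - S^[n + 1 + 1] x = _
      rw [Function.iterate_succ_apply' S (n + 1) x, Function.iterate_succ_apply' S n x]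
    rw [e]
    exact hSnon (S^[n] x) (S^[n + 1] x)
  have haanti : Antitone fun n => ‖a n‖ := antitone_nat_of_succ_le hamono
  have hbmono : ∀ n, ‖b (n + 1)‖ ≤ ‖b n‖ := by
    intro n
    have e : b (n + 1) = S (S^[n] w) - S (S^[n + 1] w) := by
      show S^[n + 1] w - S^[n + 1 + 1] w = _
      rw [Function.iterate_succ_apply' S (n + 1) w, Function.iterate_succ_apply' S n w]
    rw [e]
    exact hSnon (S^[n] w) (S^[n + 1] w)
  have hbanti : Antitone fun n => ‖b n‖ := antitone_nat_of_succ_le hbmono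
  have hb0 : ‖b 0‖ ≤ ε / 3 := by
    simpa [hb] using hw
  have hble : ∀ n, ‖b n‖ ≤ ε / 3 := fun n => le_trans (hbanti (Nat.zero_le n)) hb0
  set c : ℕ → ℝ := fun n => ‖S^[n] x - S^[n] w‖ ^ 2 with hc
  have hdesc : ∀ n, c (n + 1) + ‖a n - b n‖ ^ 2 ≤ c n := by
    intro n
    have := aux_descent S hSfirm (S^[n] x) (S^[n] w)
    have e1 : a n - b n = (S^[n] x - S (S^[n] x)) - (S^[n] w - S (S^[n] w)) := by
      show (S^[n] x - S^[n + 1] x) - (S^[n] w - S^[n + 1] w) = _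
      rw [Function.iterate_succ_apply' S n x, Function.iterate_succ_apply' S n w]
    have e2 : c (n + 1) = ‖S (S^[n] x) - S (S^[n] w)‖ ^ 2 := by
      show ‖S^[n + 1] x - S^[n + 1] w‖ ^ 2 = _
      rw [Function.iterate_succ_apply' S n x, Function.iterate_succ_apply' S n w]
    rw [e1, e2]
    exact this
  -- find one good index
  have hexist : ∃ N, ‖a N - b N‖ ^ 2 ≤ (ε / 3) ^ 2 := by
    by_contra hcon
    push_neg at hcon
    have hstep : ∀ n, c n + n * (ε / 3) ^ 2 ≤ c 0 := by
      intro n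
      induction n with
      | zero => simp
      | succ k ih =>
          have := hdesc k
          have hk := (hcon k).le
          push_cast
          push_cast at ih
          nlinarith
    obtain ⟨n, hn⟩ := exists_nat_gt (c 0 / (ε / 3) ^ 2)
    have hpos : (0:ℝ) < (ε / 3) ^ 2 := by positivity
    have h1 : c 0 < n * (ε / 3) ^ 2 := by
      rw [div_lt_iff₀ hpos] at hn
      exact hn
    have h2 := hstep n
    have h3 : 0 ≤ c n := by positivity
    linarith
  obtain ⟨N, hN⟩ := hexist
  have hab : ‖a N - b N‖ ≤ ε / 3 := by
    nlinarith [norm_nonneg (a N - b N), hε]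
  have haN : ‖a N‖ ≤ 2 * ε / 3 := by
    have := norm_sub_norm_le (a N) (b N)
    have h4 := hble N
    have h5 : ‖a N‖ ≤ ‖a N - b N‖ + ‖b N‖ := by
      have := norm_add_le (a N - b N) (b N)
      simpa using this
    linarith
  filter_upwards [eventually_ge_atTop N] with n hn
  have : ‖a n‖ ≤ ‖a N‖ := haanti hn
  calc ‖S^[n] x - S^[n+1] x‖ = ‖a n‖ := rfl
    _ ≤ ‖a N‖ := this
    _ ≤ 2 * ε / 3 := haN
    _ < ε := by linarith
end

section
/- Let X be a real Hilbert space, let m ≥ 2, and let T_1, …, T_m : X → X be firmly nonexpansive mappings such that for each i, 0 belongs to the closure of the range of Id − T_i. Then 0 belongs to the closure of the range of Id − T_m T_{m−1} ⋯ T_1. -/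
set_option maxHeartbeats 1000000
set_option synthInstance.maxHeartbeats 400000

open Filter Topology RealInnerProductSpace

private lemma quad_bound' {s β γ : ℝ} (hβ : 0 ≤ β) (hγ : 0 ≤ γ)
    (h : s^2 ≤ β * s + γ) : s ≤ β + Real.sqrt γ := by
  by_contra hc
  push_neg at hc
  nlinarith [Real.sq_sqrt hγ, Real.sqrt_nonneg γ]

theorem zero_mem_closure_range_id_sub_composition
    {X : Type*} [NormedAddCommGroup X] [InnerProductSpace ℝ X] [CompleteSpace X]
    {m : ℕ} (hm : 2 ≤ m) (T : Fin m → X → X)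
    (hfirm : ∀ i : Fin m, ∀ x y : X, ‖T i x - T i y‖ ^ 2 ≤ ⟪x - y, T i x - T i y⟫)
    (h0 : ∀ i : Fin m, (0 : X) ∈ closure (Set.range fun x : X => x - T i x)) :
    (0 : X) ∈ closure (Set.range fun x : X => x - compFold T x) := by
  haveI : NeZero m := ⟨by omega⟩
  have hm0 : (0:ℝ) < m := by positivity
  -- nonexpansiveness
  have hne : ∀ i : Fin m, ∀ x y : X, ‖T i x - T i y‖ ≤ ‖x - y‖ := by
    intro i x y
    have h := hfirm i x y
    have h2 := real_inner_le_norm (x - y) (T i x - T i y)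
    nlinarith [norm_nonneg (T i x - T i y), norm_nonneg (x - y)]
  rw [Metric.mem_closure_iff]
  intro ε hε
  -- approximate zeros of Id - T i
  set δ : ℝ := ε / (4 * m * m) with hδdef
  have hδ0 : 0 < δ := by positivity
  have hq : ∀ i : Fin m, ∃ q : X, ‖q - T i q‖ < δ := by
    intro i
    obtain ⟨b, ⟨x, rfl⟩, hb⟩ := (Metric.mem_closure_iff.1 (h0 i)) δ hδ0
    rw [dist_zero_left] at hb
    exact ⟨x, hb⟩
  choose q hqd using hq
  -- product space setting
  set E := PiLp 2 (fun _ : Fin m => X) with hE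
  haveI : CompleteSpace E := inferInstance
  set p : E := WithLp.toLp 2 (fun i => T i (q i)) with hp
  set ps : E := WithLp.toLp 2 (fun i => q i - T i (q i)) with hps
  set P : ℝ := ‖p‖ with hPdef
  set D : ℝ := ‖ps‖ with hDdef
  have hP0 : 0 ≤ P := norm_nonneg _
  have hD0 : 0 ≤ D := norm_nonneg _
  have hm1 : (1:ℝ) ≤ m := by exact_mod_cast (by omega : 1 ≤ m)
  have hD : D ≤ ε / (4 * m) := by
    have hps_le : ‖ps‖ ≤ Real.sqrt (∑ _i : Fin m, δ^2) := by
      rw [PiLp.norm_eq_of_L2]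
      apply Real.sqrt_le_sqrt
      apply Finset.sum_le_sum
      intro i _
      have hi : ‖ps i‖ < δ := hqd i
      nlinarith [norm_nonneg (ps i)]
    have hsum : (∑ _i : Fin m, δ^2) = m * δ^2 := by
      rw [Finset.sum_const, Finset.card_univ, Fintype.card_fin, nsmul_eq_mul]
    have hmd : Real.sqrt ((m:ℝ) * δ^2) ≤ m * δ := by
      calc Real.sqrt ((m:ℝ) * δ^2) ≤ Real.sqrt (((m:ℝ)*δ)^2) := by
            apply Real.sqrt_le_sqrt; nlinarith [sq_nonneg δ]
        _ = m * δ := Real.sqrt_sq (by positivity)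
    calc D ≤ Real.sqrt (∑ _i : Fin m, δ^2) := hps_le
      _ = Real.sqrt ((m:ℝ) * δ^2) := by rw [hsum]
      _ ≤ m * δ := hmd
      _ = ε / (4*m) := by rw [hδdef]; field_simp
  -- choice of lambda
  set lam : ℝ := min (1/2) (min (ε/(4*m*(P+1))) (ε^2/(16*m^2*(P+1)*(D+P+1)))) with hlamdef
  have hlam0 : 0 < lam := by
    apply lt_min (by norm_num)
    exact lt_min (by positivity) (by positivity)
  have hlam2 : lam ≤ 1/2 := min_le_left _ _
  -- the fixed point
  obtain ⟨z, hzfix⟩ : ∃ z : E, ∀ i, z i = T i ((1 - lam) • z (i - 1)) := by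
    have hK0 : (0:ℝ) ≤ 1 - lam := by linarith
    set Φ : E → E := (fun z => WithLp.toLp 2 (fun i => T i ((1 - lam) • z (i - 1)))) with hΦ
    have hlip : LipschitzWith ⟨1 - lam, hK0⟩ Φ := by
      apply LipschitzWith.of_dist_le_mul
      intro z w
      rw [PiLp.dist_eq_of_L2, PiLp.dist_eq_of_L2]
      have key : ∀ i : Fin m,
          dist (Φ z i) (Φ w i) ^ 2 ≤ (1-lam)^2 * dist (z (i-1)) (w (i-1)) ^ 2 := by
        intro i
        have h1 : dist (Φ z i) (Φ w i) ≤ (1-lam) * dist (z (i-1)) (w (i-1)) := by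
          simp only [Φ, dist_eq_norm]
          calc ‖T i ((1 - lam) • z (i - 1)) - T i ((1 - lam) • w (i - 1))‖
              ≤ ‖(1 - lam) • z (i - 1) - (1 - lam) • w (i - 1)‖ := hne _ _ _
            _ = (1-lam) * ‖z (i-1) - w (i-1)‖ := by
                rw [← smul_sub, norm_smul, Real.norm_eq_abs, abs_of_nonneg hK0]
        have d1 : (0:ℝ) ≤ dist (Φ z i) (Φ w i) := dist_nonneg
        have d2 : (0:ℝ) ≤ dist (z (i-1)) (w (i-1)) := dist_nonneg
        nlinarith
      have hre : ∑ i : Fin m, dist (z (i-1)) (w (i-1)) ^ 2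
          = ∑ i : Fin m, dist (z i) (w i) ^ 2 :=
        Fintype.sum_equiv (Equiv.subRight (1 : Fin m)) _ _ (fun i => rfl)
      calc Real.sqrt (∑ i, dist (Φ z i) (Φ w i) ^ 2)
          ≤ Real.sqrt (∑ i, (1-lam)^2 * dist (z (i-1)) (w (i-1)) ^ 2) :=
            Real.sqrt_le_sqrt (Finset.sum_le_sum fun i _ => key i)
        _ = (1-lam) * Real.sqrt (∑ i, dist (z (i-1)) (w (i-1)) ^ 2) := by
            rw [← Finset.mul_sum, Real.sqrt_mul (by positivity), Real.sqrt_sq hK0]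
        _ = (1-lam) * Real.sqrt (∑ i, dist (z i) (w i) ^ 2) := by rw [hre]
    have hcontr : ContractingWith ⟨1 - lam, hK0⟩ Φ :=
      ⟨by exact_mod_cast (by linarith : 1 - lam < 1), hlip⟩
    obtain ⟨z, hz, -⟩ := hcontr.exists_fixedPoint (0 : E) (edist_ne_top _ _)
    exact ⟨z, fun i => (congrArg (fun w : E => w i) hz).symm⟩
  -- key quantities
  set Rz : E := WithLp.toLp 2 (fun i => z (i - 1)) with hRz
  set t : ℝ := ‖z‖ with htdef
  set b : ℝ := ‖z - Rz‖ with hbdef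
  have ht0 : 0 ≤ t := norm_nonneg _
  have hb0 : 0 ≤ b := norm_nonneg _
  have hRznorm : ‖Rz‖ = t := by
    rw [htdef, PiLp.norm_eq_of_L2, PiLp.norm_eq_of_L2]
    congr 1
    exact Fintype.sum_equiv (Equiv.subRight (1 : Fin m)) _ _ (fun i => rfl)
  have hzi : ∀ i, ‖z i‖ ≤ t := by
    intro i
    rw [htdef, PiLp.norm_eq_of_L2,
      show ‖z i‖ = Real.sqrt (‖z i‖^2) from (Real.sqrt_sq (norm_nonneg _)).symm]
    exact Real.sqrt_le_sqrt
      (Finset.single_le_sum (f := fun j => ‖z j‖^2) (fun j _ => sq_nonneg _) (Finset.mem_univ i))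
  -- monotonicity inequality (firm nonexpansiveness, componentwise)
  have h1 : (0:ℝ) ≤ ⟪z - p, ((1 - lam) • Rz - z) - ps⟫ := by
    rw [PiLp.inner_apply]
    apply Finset.sum_nonneg
    intro i _
    have hcomp : (z - p) i = z i - p i := rfl
    have hcomp2 : (((1 - lam) • Rz - z) - ps) i = (1-lam) • z (i-1) - z i - ps i := rfl
    rw [hcomp, hcomp2]
    set u : X := (1-lam) • z (i-1) with hu
    have hzi' : z i = T i u := hzfix i
    have hppsi : p i = T i (q i) := rfl
    have hpsi : ps i = q i - T i (q i) := rfl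
    rw [hzi', hppsi, hpsi]
    have hre : u - T i u - (q i - T i (q i)) = (u - q i) - (T i u - T i (q i)) := by abel
    rw [hre, inner_sub_right, real_inner_self_eq_norm_sq]
    have := hfirm i u (q i)
    have hcm : ⟪T i u - T i (q i), u - q i⟫ = ⟪u - q i, T i u - T i (q i)⟫ := real_inner_comm _ _
    linarith [hcm ▸ this]
  -- expansion of the inner product
  have h2 : ⟪z - p, ((1 - lam) • Rz - z) - ps⟫
      = (1-lam) * ⟪z, Rz⟫ - t^2 - ⟪z, ps⟫ - (1-lam) * ⟪p, Rz⟫ + ⟪p, z⟫ + ⟪p, ps⟫ := by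
    simp only [inner_sub_left, inner_sub_right, real_inner_smul_right,
      real_inner_self_eq_norm_sq, htdef]
    ring
  have h3 : ⟪z, Rz⟫ = t^2 - b^2/2 := by
    have := norm_sub_sq_real z Rz
    rw [hRznorm] at this
    rw [htdef, hbdef]
    linarith [this]
  -- Cauchy-Schwarz bounds
  have hcs1 : |⟪p, Rz⟫| ≤ P * t := by
    calc |⟪p, Rz⟫| ≤ ‖p‖ * ‖Rz‖ := abs_real_inner_le_norm _ _
      _ = P * t := by rw [hRznorm, hPdef]
  have hcs2 : |⟪p, z⟫| ≤ P * t := by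
    calc |⟪p, z⟫| ≤ ‖p‖ * ‖z‖ := abs_real_inner_le_norm _ _
      _ = P * t := rfl
  have hcs3 : |⟪z, ps⟫| ≤ t * D := by
    calc |⟪z, ps⟫| ≤ ‖z‖ * ‖ps‖ := abs_real_inner_le_norm _ _
      _ = t * D := rfl
  have hcs4 : |⟪p, ps⟫| ≤ P * D := by
    calc |⟪p, ps⟫| ≤ ‖p‖ * ‖ps‖ := abs_real_inner_le_norm _ _
      _ = P * D := rfl
  have hcs5 : ⟪p, z - Rz⟫ ≤ P * b := by
    calc ⟪p, z - Rz⟫ ≤ ‖p‖ * ‖z - Rz‖ := real_inner_le_norm _ _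
      _ = P * b := rfl
  have h4 : ⟪p, z - Rz⟫ = ⟪p, z⟫ - ⟪p, Rz⟫ := inner_sub_right _ _ _
  -- main scalar inequality
  have hmain : lam * t^2 ≤ (lam*P + D)*t + P*(D+P) := by
    rw [h2, h3] at h1
    have e1 : |⟪p, Rz⟫| ≤ P * t := hcs1
    nlinarith [abs_le.1 hcs1, abs_le.1 hcs2, abs_le.1 hcs3, abs_le.1 hcs4,
      sq_nonneg (b - 2*P), hlam0.le, mul_le_mul_of_nonneg_left (abs_le.1 hcs1).2 hlam0.le]
  have hs2 : (lam*t)^2 ≤ (lam*P + D)*(lam*t) + lam*(P*(D+P)) := by nlinarith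
  have hst : lam * t ≤ (lam*P + D) + Real.sqrt (lam*(P*(D+P))) :=
    quad_bound' (by positivity) (by positivity) hs2
  -- numerical bounds
  have hlamA : lam ≤ ε/(4*m*(P+1)) := le_trans (min_le_right _ _) (min_le_left _ _)
  have hlamB : lam ≤ ε^2/(16*m^2*(P+1)*(D+P+1)) := le_trans (min_le_right _ _) (min_le_right _ _)
  have hA : lam * P ≤ ε/(4*m) := by
    have s1 : lam * P ≤ (ε/(4*m*(P+1))) * P := mul_le_mul_of_nonneg_right hlamA hP0
    have s2 : (ε/(4*m*(P+1))) * P ≤ (ε/(4*m*(P+1))) * (P+1) :=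
      mul_le_mul_of_nonneg_left (by linarith) (by positivity)
    have s3 : (ε/(4*m*(P+1))) * (P+1) = ε/(4*m) := by field_simp
    linarith
  have hC : Real.sqrt (lam*(P*(D+P))) ≤ ε/(4*m) := by
    have h5 : lam*(P*(D+P)) ≤ (ε/(4*m))^2 := by
      have s1 : lam*(P*(D+P)) ≤ lam * ((P+1)*(D+P+1)) :=
        mul_le_mul_of_nonneg_left (by nlinarith) hlam0.le
      have s2 : lam * ((P+1)*(D+P+1)) ≤ (ε^2/(16*m^2*(P+1)*(D+P+1))) * ((P+1)*(D+P+1)) :=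
        mul_le_mul_of_nonneg_right hlamB (by positivity)
      have s3 : (ε^2/(16*m^2*(P+1)*(D+P+1))) * ((P+1)*(D+P+1)) = (ε/(4*m))^2 := by
        field_simp; ring
      linarith
    calc Real.sqrt (lam*(P*(D+P))) ≤ Real.sqrt ((ε/(4*m))^2) := Real.sqrt_le_sqrt h5
      _ = ε/(4*m) := Real.sqrt_sq (by positivity)
  have hfinal : lam * t ≤ 3 * (ε/(4*m)) := by linarith
  -- assemble: approximate fixed point of the composition
  set x : X := z ((0 : Fin m) - 1) with hx
  have hstep : ∀ i : Fin m, ‖T i (z (i-1)) - z i‖ ≤ lam * t := by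
    intro i
    rw [hzfix i]
    calc ‖T i (z (i-1)) - T i ((1-lam) • z (i-1))‖
        ≤ ‖z (i-1) - (1-lam) • z (i-1)‖ := hne _ _ _
      _ = lam * ‖z (i-1)‖ := by
          rw [show z (i-1) - (1-lam) • z (i-1) = lam • z (i-1) by
            rw [sub_smul, one_smul]; abel]
          rw [norm_smul, Real.norm_eq_abs, abs_of_nonneg hlam0.le]
      _ ≤ lam * t := mul_le_mul_of_nonneg_left (hzi _) hlam0.le
  set g : ℕ → X := fun k => ((List.ofFn T).take k).foldl (fun y f => f y) x with hg
  have hg0 : g 0 = x := rfl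
  have hgs : ∀ k (hk : k < m), g (k+1) = T ⟨k, hk⟩ (g k) := by
    intro k hk
    rw [hg]
    simp only [List.take_succ]
    rw [List.foldl_append]
    have : (List.ofFn T)[k]? = some (T ⟨k, hk⟩) := by
      rw [List.getElem?_eq_getElem (by simpa using hk)]
      simp
    rw [this]
    simp
  have hgm : g m = compFold T x := by
    show List.foldl (fun y f => f y) x (List.take m (List.ofFn T)) = compFold T x
    rw [List.take_of_length_le (le_of_eq (List.length_ofFn (f := T)))]
    rfl
  have key : ∀ k : ℕ, ∀ hk : k < m, ‖g (k+1) - z ⟨k, hk⟩‖ ≤ (k+1) * (lam * t) := by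
    intro k
    induction k with
    | zero =>
      intro hk
      rw [hgs 0 hk, hg0]
      have h0i : (⟨0, hk⟩ : Fin m) = 0 := rfl
      rw [h0i]
      have := hstep 0
      rw [hx]
      simpa using this
    | succ n ih =>
      intro hk
      have hn : n < m := Nat.lt_of_succ_lt hk
      have hsub : (⟨n+1, hk⟩ : Fin m) - 1 = ⟨n, hn⟩ := by
        apply Fin.ext
        rw [Fin.sub_def]
        have hv1 : (1 : Fin m).val = 1 := by
          rw [Fin.val_one']; exact Nat.mod_eq_of_lt (by omega)
        simp only [hv1]
        show (m - 1 + (n + 1)) % m = n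
        rw [show m - 1 + (n + 1) = n + m by omega, Nat.add_mod_right, Nat.mod_eq_of_lt hn]
      rw [hgs (n+1) hk]
      calc ‖T ⟨n+1, hk⟩ (g (n+1)) - z ⟨n+1, hk⟩‖
          ≤ ‖T ⟨n+1, hk⟩ (g (n+1)) - T ⟨n+1, hk⟩ (z (⟨n+1, hk⟩ - 1))‖
            + ‖T ⟨n+1, hk⟩ (z (⟨n+1, hk⟩ - 1)) - z ⟨n+1, hk⟩‖ :=
            norm_sub_le_norm_sub_add_norm_sub _ _ _
        _ ≤ ‖g (n+1) - z ⟨n, hn⟩‖ + lam * t := by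
            gcongr
            · rw [hsub]; exact hne _ _ _
            · exact hstep _
        _ ≤ (n+1) * (lam*t) + lam * t := by gcongr; exact ih hn
        _ = ((n:ℝ)+1+1) * (lam*t) := by ring
        _ = (((n+1 : ℕ) : ℝ)+1) * (lam*t) := by push_cast; ring
  -- conclude
  have hlast : ((0 : Fin m) - 1) = (⟨m-1, by omega⟩ : Fin m) := by
    apply Fin.ext
    rw [Fin.sub_def]
    have hv1 : (1 : Fin m).val = 1 := by
      rw [Fin.val_one']; exact Nat.mod_eq_of_lt (by omega)
    simp only [hv1]
    show (m - 1 + (0:Fin m).val) % m = m - 1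
    rw [Fin.val_zero, Nat.add_zero, Nat.mod_eq_of_lt (by omega)]
  have hkey := key (m-1) (by omega)
  rw [show m - 1 + 1 = m by omega, hgm] at hkey
  have hxz : z (⟨m-1, by omega⟩ : Fin m) = x := by rw [hx, hlast]
  rw [hxz] at hkey
  refine ⟨x - compFold T x, ⟨x, rfl⟩, ?_⟩
  rw [dist_zero_left]
  have : ‖x - compFold T x‖ = ‖compFold T x - x‖ := norm_sub_rev _ _
  rw [this]
  calc ‖compFold T x - x‖ ≤ (((m-1 : ℕ) : ℝ)+1) * (lam * t) := hkey
    _ = m * (lam * t) := by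
        rw [show (((m-1 : ℕ) : ℝ)+1) = (((m-1+1 : ℕ)) : ℝ) by push_cast; ring,
          show (m-1+1 : ℕ) = m by omega]
    _ ≤ m * (3 * (ε/(4*m))) := by
        apply mul_le_mul_of_nonneg_left hfinal (by positivity)
    _ = 3*ε/4 := by field_simp
    _ < ε := by linarith
end

section
/- Let X be a real Hilbert space, let m ≥ 2, and let T_1, …, T_m : X → X be firmly nonexpansive mappings such that for each i, 0 belongs to the closure of the range of Id − T_i. Then for every ε > 0 there exist b = (b_1, …, b_m) and x = (x_1, …, x_m) in X^m such that (Σ_{i=1}^m ‖b_i‖²)^{1/2} ≤ ε and, for every i ∈ {1, …, m}, x_i = T_i(b_i + x_{i−1}), where x_0 := x_m. -/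
set_option maxHeartbeats 1000000

open Filter Topology RealInnerProductSpace

section aux
variable {Y : Type*} [NormedAddCommGroup Y] [InnerProductSpace ℝ Y]

lemma fne_disp (t : Y → Y) (h : ∀ x y : Y, ‖t x - t y‖ ^ 2 ≤ ⟪x - y, t x - t y⟫)
    (x y : Y) :
    ‖(x - t x) - (y - t y)‖ ^ 2 ≤ ⟪x - y, (x - t x) - (y - t y)⟫ := by
  have h1 := h x y
  have e1 : (x - t x) - (y - t y) = (x - y) - (t x - t y) := by abel
  have e2 : ⟪x - y, (x - y) - (t x - t y)⟫ = ‖x - y‖ ^ 2 - ⟪x - y, t x - t y⟫ := by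
    rw [inner_sub_right, real_inner_self_eq_norm_sq]
  rw [e1, e2, norm_sub_sq_real]
  linarith

lemma sigma_apply {m : ℕ} [NeZero m] (c : Fin m) (z : PiLp 2 fun _ : Fin m => Y) (i : Fin m) :
    (LinearIsometryEquiv.piLpCongrLeft 2 ℝ Y (Equiv.subRight c).symm) z i = z (i - c) := by
  simp [LinearIsometryEquiv.piLpCongrLeft_apply, Equiv.piCongrLeft'_apply]

end aux

theorem almost_fixed_points_of_shifted_system
    {X : Type*} [NormedAddCommGroup X] [InnerProductSpace ℝ X] [CompleteSpace X]
    {m : ℕ} (hm : 2 ≤ m) (T : Fin m → X → X)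
    (hfirm : ∀ i : Fin m, ∀ x y : X, ‖T i x - T i y‖ ^ 2 ≤ ⟪x - y, T i x - T i y⟫)
    (h0 : ∀ i : Fin m, (0 : X) ∈ closure (Set.range fun x : X => x - T i x)) :
    ∀ ε > (0 : ℝ), ∃ b x : Fin m → X,
      Real.sqrt (∑ i, ‖b i‖ ^ 2) ≤ ε ∧
      ∀ i : Fin m, x i = T i (b i + x (i - ⟨1, by omega⟩)) := by
  intro ε hε
  haveI : NeZero m := ⟨by omega⟩
  haveI : CompleteSpace (PiLp 2 fun _ : Fin m => X) :=
    inferInstance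
  have hmR : (1 : ℝ) ≤ m := by exact_mod_cast Nat.one_le_of_lt hm
  set c : Fin m := ⟨1, by omega⟩ with hcdef
  set E := PiLp 2 (fun _ : Fin m => X) with hEdef
  set mk : (Fin m → X) → E := fun f => (WithLp.equiv 2 (∀ _ : Fin m, X)).symm f with hmkdef
  have hmk : ∀ (f : Fin m → X) (i : Fin m), mk f i = f i := fun f i => rfl
  set σ : E ≃ₗᵢ[ℝ] E := LinearIsometryEquiv.piLpCongrLeft 2 ℝ X (Equiv.subRight c).symm
    with hσdef
  have hσ : ∀ (z : E) (i : Fin m), σ z i = z (i - c) := fun z i => sigma_apply c z i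
  -- T is nonexpansive
  have hne : ∀ (i : Fin m) (x y : X), ‖T i x - T i y‖ ≤ ‖x - y‖ := by
    intro i x y
    have h1 := hfirm i x y
    have h2 : ⟪x - y, T i x - T i y⟫ ≤ ‖x - y‖ * ‖T i x - T i y‖ := real_inner_le_norm _ _
    nlinarith [norm_nonneg (T i x - T i y), norm_nonneg (x - y)]
  -- choose near-fixed points
  have hδ : (0 : ℝ) < ε / (6 * m) := by positivity
  have hex : ∀ i : Fin m, ∃ q : X, ‖q - T i q‖ ≤ ε / (6 * m) := by
    intro i
    have h1 := h0 i
    rw [Metric.mem_closure_iff] at h1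
    obtain ⟨y, hy, hy2⟩ := h1 _ hδ
    obtain ⟨q, rfl⟩ := hy
    refine ⟨q, ?_⟩
    rw [dist_comm, dist_zero_right] at hy2
    exact hy2.le
  choose p hp using hex
  -- product-space quantities
  set pE : E := mk p with hpEdef
  set Fp : E := pE - mk (fun i => T i (p i)) with hFpdef
  have hFp_i : ∀ i : Fin m, Fp i = p i - T i (p i) := by
    intro i
    rw [hFpdef, PiLp.sub_apply, hpEdef, hmk, hmk]
  set d : ℝ := ‖Fp‖ with hddef
  set P : ℝ := ‖pE‖ with hPdef
  have hd0 : 0 ≤ d := norm_nonneg _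
  have hP0 : 0 ≤ P := norm_nonneg _
  have hd : d ≤ ε / 6 := by
    have hsq : d ^ 2 = ∑ i, ‖p i - T i (p i)‖ ^ 2 := by
      rw [hddef, PiLp.norm_sq_eq_of_L2]
      exact Finset.sum_congr rfl fun i _ => by rw [hFp_i]
    have hb : ∀ i : Fin m, ‖p i - T i (p i)‖ ^ 2 ≤ (ε / (6 * m)) ^ 2 := fun i =>
      pow_le_pow_left₀ (norm_nonneg _) (hp i) 2
    have hsum : d ^ 2 ≤ m * (ε / (6 * m)) ^ 2 := by
      rw [hsq]
      calc ∑ i, ‖p i - T i (p i)‖ ^ 2 ≤ ∑ _i : Fin m, (ε / (6 * m)) ^ 2 :=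
            Finset.sum_le_sum fun i _ => hb i
        _ = m * (ε / (6 * m)) ^ 2 := by simp [Finset.sum_const, Finset.card_univ, nsmul_eq_mul]
    have hle : d ^ 2 ≤ (ε / 6) ^ 2 := by
      have hm0 : (0:ℝ) < m := by linarith
      have h1 : (m:ℝ) * (ε / (6 * m)) ^ 2 ≤ (ε / 6) ^ 2 := by
        have heq : (m:ℝ) * (ε / (6 * m)) ^ 2 = ε ^ 2 / (36 * m) := by
          field_simp; ring
        have hle2 : ε ^ 2 / (36 * m) ≤ ε ^ 2 / 36 := by
          rw [div_le_div_iff₀ (by positivity) (by norm_num)]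
          nlinarith [sq_nonneg ε, hm0]
        have heq2 : (ε / 6) ^ 2 = ε ^ 2 / 36 := by ring
        rw [heq, heq2]
        exact hle2
      linarith
    nlinarith [hε]
  -- the regularization parameter
  set μ : ℝ := ε ^ 2 / (2 * P ^ 2 + 2) with hμdef
  have hμ : 0 < μ := by positivity
  have hμP : μ * P ^ 2 ≤ ε ^ 2 / 2 := by
    rw [hμdef, div_mul_eq_mul_div, div_le_div_iff₀ (by positivity) (by norm_num)]
    nlinarith [sq_nonneg ε, sq_nonneg P]
  -- the map and its fixed point
  set J : E → E := fun u => mk (fun i => T i (u i)) with hJdef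
  have hJ_i : ∀ (u : E) (i : Fin m), J u i = T i (u i) := by
    intro u i
    simp only [hJdef]
    rw [hmk]
  have hJle : ∀ u v : E, ‖J u - J v‖ ≤ ‖u - v‖ := by
    intro u v
    have hsq : ‖J u - J v‖ ^ 2 ≤ ‖u - v‖ ^ 2 := by
      rw [PiLp.norm_sq_eq_of_L2, PiLp.norm_sq_eq_of_L2]
      refine Finset.sum_le_sum fun i _ => ?_
      rw [PiLp.sub_apply, PiLp.sub_apply, hJ_i, hJ_i]
      exact pow_le_pow_left₀ (norm_nonneg _) (hne i (u i) (v i)) 2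
    nlinarith [norm_nonneg (J u - J v), norm_nonneg (u - v)]
  have hμ1 : (0:ℝ) < 1 + μ := by linarith
  set Φ : E → E := fun u => (1 + μ)⁻¹ • σ (J u) with hΦdef
  set K : NNReal := ⟨(1 + μ)⁻¹, by positivity⟩ with hKdef
  have hΦlip : LipschitzWith K Φ := by
    apply LipschitzWith.of_dist_le_mul
    intro u v
    rw [dist_eq_norm, dist_eq_norm]
    simp only [hΦdef]
    have h1 : (1 + μ)⁻¹ • σ (J u) - (1 + μ)⁻¹ • σ (J v)
        = (1 + μ)⁻¹ • (σ (J u) - σ (J v)) := by rw [smul_sub]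
    rw [h1, norm_smul, ← map_sub σ, σ.norm_map]
    have h2 : ‖(1 + μ)⁻¹‖ = (1 + μ)⁻¹ := Real.norm_of_nonneg (by positivity)
    have h3 : (K : ℝ) = (1 + μ)⁻¹ := rfl
    rw [h2, h3]
    exact mul_le_mul_of_nonneg_left (hJle u v) (by positivity)
  have hcontr : ContractingWith K Φ := by
    refine ⟨?_, hΦlip⟩
    rw [← NNReal.coe_lt_coe]
    show (1 + μ)⁻¹ < 1
    rw [inv_lt_one_iff₀]
    right; linarith
  obtain ⟨z, hz⟩ : ∃ z : E, Φ z = z := ⟨hcontr.fixedPoint, hcontr.fixedPoint_isFixedPt⟩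
  have hSz : σ (J z) = (1 + μ) • z := by
    have h1 : (1 + μ)⁻¹ • σ (J z) = z := hz
    have h2 := congrArg (fun w : E => (1 + μ) • w) h1
    simpa [smul_smul, mul_inv_cancel₀ (ne_of_gt hμ1)] using h2
  set Fz : E := z - J z with hFzdef
  have hFz_i : ∀ i : Fin m, Fz i = z i - T i (z i) := by
    intro i
    rw [hFzdef, PiLp.sub_apply, hJ_i]
  set r : E := z - σ (J z) with hrdef
  have hr_i : ∀ i : Fin m, r i = z i - T (i - c) (z (i - c)) := by
    intro i
    rw [hrdef, PiLp.sub_apply, hσ, hJ_i]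
  have hr : r = -(μ • z) := by
    rw [hrdef, hSz]
    have h1 : (1 + μ) • z = z + μ • z := by rw [add_smul, one_smul]
    rw [h1]; abel
  have hrnorm : ‖r‖ = μ * ‖z‖ := by
    rw [hr, norm_neg, norm_smul, Real.norm_of_nonneg (le_of_lt hμ)]
  set Z : ℝ := ‖z‖ with hZdef
  set a : ℝ := ‖Fz - Fp‖ with hadef
  set l : ℝ := ‖z - σ z‖ with hldef
  have hZ0 : 0 ≤ Z := norm_nonneg _
  have ha0 : 0 ≤ a := norm_nonneg _
  have hl0 : 0 ≤ l := norm_nonneg _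
  -- firm nonexpansiveness summed
  have h3 : a ^ 2 ≤ ⟪z - pE, Fz - Fp⟫ := by
    have hL : a ^ 2 = ∑ i, ‖(z i - T i (z i)) - (p i - T i (p i))‖ ^ 2 := by
      rw [hadef, PiLp.norm_sq_eq_of_L2]
      exact Finset.sum_congr rfl fun i _ => by rw [PiLp.sub_apply, hFz_i, hFp_i]
    have hR : ⟪z - pE, Fz - Fp⟫
        = ∑ i, ⟪z i - p i, (z i - T i (z i)) - (p i - T i (p i))⟫ := by
      rw [PiLp.inner_apply]
      refine Finset.sum_congr rfl fun i _ => ?_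
      rw [PiLp.sub_apply, PiLp.sub_apply, hFz_i, hFp_i, hpEdef, hmk]
    rw [hL, hR]
    exact Finset.sum_le_sum fun i _ => fne_disp (T i) (hfirm i) (z i) (p i)
  have h4 : ⟪z, Fz⟫ = ⟪z - pE, Fz - Fp⟫ + ⟪pE, Fz - Fp⟫ + ⟪z, Fp⟫ := by
    simp only [inner_sub_left, inner_sub_right]
    ring
  have h5 : ⟪z, J z - σ (J z)⟫ = ⟪z, z - σ z⟫ - ⟪z, Fz - σ Fz⟫ := by
    have hJz : J z = z - Fz := by rw [hFzdef]; abel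
    have h1 : J z - σ (J z) = (z - σ z) - (Fz - σ Fz) := by
      rw [hJz, map_sub]; abel
    rw [h1, inner_sub_right]
  have h6 : ⟪z, z - σ z⟫ = l ^ 2 / 2 := by
    have hzn : ‖σ z‖ = ‖z‖ := σ.norm_map z
    have h1 : l ^ 2 = ‖z‖ ^ 2 - 2 * ⟪z, σ z⟫ + ‖σ z‖ ^ 2 := by
      rw [hldef]; exact norm_sub_sq_real z (σ z)
    rw [inner_sub_right, real_inner_self_eq_norm_sq]
    rw [hzn] at h1
    linarith
  have h7 : ⟪z, Fz - σ Fz⟫ ≤ l * ‖Fz‖ := by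
    have h1 : ⟪z, σ Fz⟫ = ⟪σ.symm z, Fz⟫ := by
      conv_lhs => rw [← σ.apply_symm_apply z]
      exact σ.inner_map_map (σ.symm z) Fz
    have h2 : ⟪z, Fz - σ Fz⟫ = ⟪z - σ.symm z, Fz⟫ := by
      rw [inner_sub_right, inner_sub_left, h1]
    have h3' : ‖z - σ.symm z‖ = l := by
      have h4' : ‖z - σ.symm z‖ = ‖σ (z - σ.symm z)‖ := (σ.norm_map _).symm
      rw [h4', map_sub, σ.apply_symm_apply, norm_sub_rev]
    rw [h2]
    calc ⟪z - σ.symm z, Fz⟫ ≤ ‖z - σ.symm z‖ * ‖Fz‖ := real_inner_le_norm _ _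
      _ = l * ‖Fz‖ := by rw [h3']
  have h8 : ‖Fz‖ ≤ a + d := by
    have h1 : Fz = (Fz - Fp) + Fp := by abel
    calc ‖Fz‖ = ‖(Fz - Fp) + Fp‖ := by rw [← h1]
      _ ≤ ‖Fz - Fp‖ + ‖Fp‖ := norm_add_le _ _
      _ = a + d := rfl
  have h9 : l ≤ 2 * Z := by
    have h1 : ‖z - σ z‖ ≤ ‖z‖ + ‖σ z‖ := norm_sub_le _ _
    rw [σ.norm_map] at h1
    rw [hldef, hZdef]; linarith
  have h10 : -(P * a) ≤ ⟪pE, Fz - Fp⟫ := by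
    have h1 := abs_real_inner_le_norm pE (Fz - Fp)
    have h2 := neg_abs_le (⟪pE, Fz - Fp⟫ : ℝ)
    rw [abs_le] at h1
    linarith [h1.1]
  have h11 : -(Z * d) ≤ ⟪z, Fp⟫ := by
    have h1 := abs_real_inner_le_norm z Fp
    rw [abs_le] at h1
    linarith [h1.1]
  have hkey : ⟪z, r⟫ = -(μ * Z ^ 2) := by
    rw [hr, inner_neg_right, real_inner_smul_right, real_inner_self_eq_norm_sq]
  have hsplit : ⟪z, r⟫ = ⟪z, Fz⟫ + ⟪z, J z - σ (J z)⟫ := by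
    have h1 : r = Fz + (J z - σ (J z)) := by rw [hrdef, hFzdef]; abel
    rw [h1, inner_add_right]
  -- master inequality
  have hFzn : ⟪z, Fz - σ Fz⟫ ≤ l * (a + d) := by
    calc ⟪z, Fz - σ Fz⟫ ≤ l * ‖Fz‖ := h7
      _ ≤ l * (a + d) := mul_le_mul_of_nonneg_left h8 hl0
  have hld : l * d ≤ 2 * Z * d := mul_le_mul_of_nonneg_right h9 hd0
  have master : μ * Z ^ 2 ≤ P ^ 2 / 2 + 3 * d * Z := by
    have hA : a ^ 2 - P * a - Z * d ≤ ⟪z, Fz⟫ := by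
      rw [h4]; linarith
    have hB : l ^ 2 / 2 - l * (a + d) ≤ ⟪z, J z - σ (J z)⟫ := by
      rw [h5, h6]; linarith
    have hsum : a ^ 2 - P * a - Z * d + (l ^ 2 / 2 - l * (a + d)) ≤ -(μ * Z ^ 2) := by
      rw [← hkey, hsplit]; linarith
    nlinarith [sq_nonneg (a - l), sq_nonneg (P - a)]
  -- conclude
  set R : ℝ := μ * Z with hRdef
  have hR0 : 0 ≤ R := mul_nonneg (le_of_lt hμ) hZ0
  have hR2 : R ^ 2 ≤ ε ^ 2 / 4 + (ε / 2) * R := by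
    have h1 : μ * (μ * Z ^ 2) ≤ μ * (P ^ 2 / 2 + 3 * d * Z) :=
      mul_le_mul_of_nonneg_left master (le_of_lt hμ)
    have h2 : R ^ 2 = μ * (μ * Z ^ 2) := by rw [hRdef]; ring
    have h3' : μ * (P ^ 2 / 2 + 3 * d * Z) = (μ * P ^ 2) / 2 + 3 * d * R := by
      rw [hRdef]; ring
    have h4' : 3 * d * R ≤ (ε / 2) * R := by
      apply mul_le_mul_of_nonneg_right _ hR0
      linarith
    linarith [h1, h2, h3', h4', hμP]
  have hfinal : R ≤ ε := by
    by_contra hcon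
    push_neg at hcon
    have hRpos : 0 < R := lt_trans hε hcon
    have h1 : ε ^ 2 < R ^ 2 := by
      apply pow_lt_pow_left₀ hcon (le_of_lt hε)
      norm_num
    have h2 : (ε / 2) * R < (R / 2) * R := by
      apply mul_lt_mul_of_pos_right _ hRpos
      linarith
    have h3 : (R / 2) * R = R ^ 2 / 2 := by ring
    have h4 : 0 < R ^ 2 := by positivity
    linarith
  -- witnesses
  refine ⟨fun i => z i - T (i - c) (z (i - c)), fun i => T i (z i), ?_, ?_⟩
  · have hsum : ∑ i, ‖z i - T (i - c) (z (i - c))‖ ^ 2 = ‖r‖ ^ 2 := by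
      rw [PiLp.norm_sq_eq_of_L2]
      exact Finset.sum_congr rfl fun i _ => by rw [hr_i]
    rw [hsum, Real.sqrt_sq (norm_nonneg r), hrnorm]
    exact hfinal
  · intro i
    show T i (z i) = T i ((z i - T (i - c) (z (i - c))) + T (i - ⟨1, by omega⟩) (z (i - ⟨1, by omega⟩)))
    have hcc : (⟨1, by omega⟩ : Fin m) = c := rfl
    rw [hcc, sub_add_cancel]
end

section
/- Let X be a real Hilbert space, let m ≥ 2, and let T_1, …, T_m : X → X be firmly nonexpansive mappings such that for each i, 0 belongs to the closure of the range of Id − T_i. Then for every ε > 0 there exists x ∈ X such that ‖x − T_m T_{m−1} ⋯ T_1 x‖ ≤ m² ε. -/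
open Filter Topology RealInnerProductSpace

/-- Auxiliary: the partial composition `T (n-1) ∘ ⋯ ∘ T 0` as a recursive chain. -/
def chainFun {X : Type*} {m : ℕ} (T : Fin m → X → X) : ℕ → X → X
  | 0 => fun x => x
  | n + 1 => fun x => if h : n < m then T ⟨n, h⟩ (chainFun T n x) else chainFun T n x

lemma chainFun_succ_of_lt {X : Type*} {m : ℕ} (T : Fin m → X → X) {n : ℕ} (h : n < m) (x : X) :
    chainFun T (n + 1) x = T ⟨n, h⟩ (chainFun T n x) := by
  simp [chainFun, h]

lemma compFold_eq_chainFun {X : Type*} {m : ℕ} (T : Fin m → X → X) (x : X) :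
    compFold T x = chainFun T m x := by
  have key : ∀ n, n ≤ m → ((List.ofFn T).take n).foldl (fun y f => f y) x = chainFun T n x := by
    intro n
    induction n with
    | zero => intro _; simp [chainFun]
    | succ k ih =>
      intro hk
      have hkm : k < m := hk
      have h1 : (List.ofFn T).take (k + 1) = (List.ofFn T).take k ++ [T ⟨k, hkm⟩] := by
        rw [List.take_succ]
        congr 1
        have h2 : (List.ofFn T)[k]? = some (T ⟨k, hkm⟩) := by
          rw [List.getElem?_eq_getElem (by simpa using hkm)]
          simp
        simp [h2]
      rw [h1, List.foldl_append, ih (le_of_lt hkm), chainFun_succ_of_lt T hkm]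
      simp
  have h3 := key m le_rfl
  have h4 : (List.ofFn T).take m = List.ofFn T := List.take_of_length_le (by simp)
  rw [h4] at h3
  exact h3

set_option maxHeartbeats 4000000 in
theorem composition_has_approximate_fixed_points
    {X : Type*} [NormedAddCommGroup X] [InnerProductSpace ℝ X] [CompleteSpace X]
    {m : ℕ} (hm : 2 ≤ m) (T : Fin m → X → X)
    (hfirm : ∀ i : Fin m, ∀ x y : X, ‖T i x - T i y‖ ^ 2 ≤ ⟪x - y, T i x - T i y⟫)
    (h0 : ∀ i : Fin m, (0 : X) ∈ closure (Set.range fun x : X => x - T i x)) :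
    ∀ ε > (0 : ℝ), ∃ x : X, ‖x - compFold T x‖ ≤ (m : ℝ) ^ 2 * ε := by
  intro ε hε
  set δ : ℝ := ε / 2 with hδdef
  have hδ : 0 < δ := by positivity
  -- choose anchors with small displacement
  have hpex : ∀ i : Fin m, ∃ q : X, ‖q - T i q‖ ≤ δ := by
    intro i
    have h := h0 i
    rw [Metric.mem_closure_iff] at h
    obtain ⟨b, hb, hdist⟩ := h δ hδ
    obtain ⟨q, rfl⟩ := hb
    refine ⟨q, ?_⟩
    rw [dist_comm, dist_zero_right] at hdist
    exact hdist.le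
  choose p hp using hpex
  -- each T i is nonexpansive
  have hne : ∀ (i : Fin m) (x y : X), ‖T i x - T i y‖ ≤ ‖x - y‖ := by
    intro i x y
    have h1 := hfirm i x y
    have h2 := real_inner_le_norm (x - y) (T i x - T i y)
    nlinarith [norm_nonneg (T i x - T i y), norm_nonneg (x - y)]
  -- constants
  set P : ℝ := ∑ i : Fin m, ‖p i‖ with hPdef
  have hPnn : 0 ≤ P := Finset.sum_nonneg fun _ _ => norm_nonneg _
  have hpP : ∀ i : Fin m, ‖p i‖ ≤ P :=
    fun i => Finset.single_le_sum (f := fun j => ‖p j‖) (fun _ _ => norm_nonneg _)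
      (Finset.mem_univ i)
  set K : ℝ := m * (2 * P + δ) with hKdef
  have hKnn : 0 ≤ K := by positivity
  set D : ℝ := 2 * m * δ * K + m * (P + δ) ^ 2 + m * δ ^ 2 with hDdef
  have hDnn : 0 ≤ D := by positivity
  set E : ℝ := D + 1 with hEdef
  have hEpos : 0 < E := by linarith
  set lam : ℝ := max (1 / 2) (1 - ε ^ 2 / E) with hlamdef
  have hlam_half : 1 / 2 ≤ lam := le_max_left _ _
  have hlam_nonneg : 0 ≤ lam := by linarith
  have hlam_lt : lam < 1 := by
    apply max_lt (by norm_num)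
    have : 0 < ε ^ 2 / E := div_pos (by positivity) hEpos
    linarith
  have hlam_le1 : lam ≤ 1 := hlam_lt.le
  have hlam_ub : 1 - lam ≤ ε ^ 2 / E := by
    have h := le_max_right (1 / 2) (1 - ε ^ 2 / E)
    rw [← hlamdef] at h
    linarith
  -- the composition and its nonexpansiveness
  set S : X → X := compFold T with hSdef
  have hSchain : ∀ z, S z = chainFun T m z := fun z => compFold_eq_chainFun T z
  have hchain_ne : ∀ n (x y : X), ‖chainFun T n x - chainFun T n y‖ ≤ ‖x - y‖ := by
    intro n
    induction n with
    | zero => intro x y; simp [chainFun]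
    | succ k ih =>
      intro x y
      by_cases h : k < m
      · rw [chainFun_succ_of_lt T h, chainFun_succ_of_lt T h]
        exact le_trans (hne _ _ _) (ih x y)
      · simp only [chainFun, dif_neg h]
        exact ih x y
  have hSne : ∀ x y, ‖S x - S y‖ ≤ ‖x - y‖ := by
    intro x y
    rw [hSchain, hSchain]
    exact hchain_ne m x y
  -- the contraction and its fixed point
  set f : X → X := fun z => S (lam • z) with hfdef
  have hcontract : ContractingWith ⟨lam, hlam_nonneg⟩ f := by
    constructor
    · exact_mod_cast hlam_lt
    · apply LipschitzWith.of_dist_le_mul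
      intro x y
      rw [dist_eq_norm, dist_eq_norm]
      calc ‖f x - f y‖ ≤ ‖lam • x - lam • y‖ := hSne _ _
        _ = lam * ‖x - y‖ := by
            rw [← smul_sub, norm_smul]
            simp [abs_of_nonneg hlam_nonneg]
  have : Nonempty X := ⟨0⟩
  obtain ⟨x, hxfix, -⟩ := hcontract.exists_fixedPoint (0 : X) (edist_ne_top _ _)
  -- hxfix : Function.IsFixedPt f x, i.e. f x = x
  have hxfix' : S (lam • x) = x := hxfix
  -- the chain from lam • x
  set w : ℕ → X := fun n => chainFun T n (lam • x) with hwdef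
  have hw0 : w 0 = lam • x := rfl
  have hwm : w m = x := by
    rw [hwdef]
    simp only
    rw [← hSchain]
    exact hxfix'
  have hwsucc : ∀ k (h : k < m), w (k + 1) = T ⟨k, h⟩ (w k) := by
    intro k h
    rw [hwdef]
    exact chainFun_succ_of_lt T h _
  -- norm growth along the chain
  have hTp : ∀ i : Fin m, ‖T i (p i)‖ ≤ P + δ := by
    intro i
    calc ‖T i (p i)‖ = ‖p i - (p i - T i (p i))‖ := by rw [sub_sub_cancel]
      _ ≤ ‖p i‖ + ‖p i - T i (p i)‖ := norm_sub_le _ _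
      _ ≤ P + δ := add_le_add (hpP i) (hp i)
  have hwnorm : ∀ i, i ≤ m → ‖w i‖ ≤ ‖x‖ + i * (2 * P + δ) := by
    intro i
    induction i with
    | zero =>
      intro _
      rw [hw0, norm_smul]
      simp only [Real.norm_eq_abs, abs_of_nonneg hlam_nonneg, Nat.cast_zero, zero_mul, add_zero]
      nlinarith [norm_nonneg x]
    | succ k ih =>
      intro hk
      have hkm : k < m := hk
      have ihk := ih (le_of_lt hkm)
      rw [hwsucc k hkm]
      set i : Fin m := ⟨k, hkm⟩
      have h1 : ‖T i (w k)‖ ≤ ‖T i (w k) - T i (p i)‖ + ‖T i (p i)‖ := by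
        calc ‖T i (w k)‖ = ‖(T i (w k) - T i (p i)) + T i (p i)‖ := by
              rw [sub_add_cancel]
          _ ≤ ‖T i (w k) - T i (p i)‖ + ‖T i (p i)‖ := norm_add_le _ _
      have h2 : ‖T i (w k) - T i (p i)‖ ≤ ‖w k - p i‖ := hne i _ _
      have h3 : ‖w k - p i‖ ≤ ‖w k‖ + ‖p i‖ := norm_sub_le _ _
      have h4 := hTp i
      have h5 := hpP i
      push_cast
      nlinarith
  have hwK : ∀ i, i ≤ m → ‖w i‖ ≤ ‖x‖ + K := by
    intro i hi
    have h1 := hwnorm i hi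
    have h2 : (i : ℝ) ≤ (m : ℝ) := by exact_mod_cast hi
    have h3 : (i : ℝ) * (2 * P + δ) ≤ (m : ℝ) * (2 * P + δ) := by
      apply mul_le_mul_of_nonneg_right h2
      positivity
    rw [hKdef]
    linarith
  -- the key per-step potential estimate
  set C : ℝ := 2 * δ * (‖x‖ + K) + (P + δ) ^ 2 + δ ^ 2 with hCdef
  have hstep : ∀ k, k < m → ‖w (k + 1)‖ ^ 2 ≤ ‖w k‖ ^ 2 + C := by
    intro k hk
    set i : Fin m := ⟨k, hk⟩
    set r : X := p i - T i (p i) with hrdef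
    set s : X := w k - T i (w k) with hsdef
    have hws : w (k + 1) = w k - s := by
      rw [hwsucc k hk, hsdef]
      abel
    -- firm nonexpansiveness in (Id - T) form
    have hkey : ‖s - r‖ ^ 2 ≤ ⟪w k - p i, s - r⟫ := by
      have hab : s - r = (w k - p i) - (T i (w k) - T i (p i)) := by
        rw [hsdef, hrdef]; abel
      have h1 : ‖s - r‖ ^ 2 = ‖w k - p i‖ ^ 2
          - 2 * ⟪w k - p i, T i (w k) - T i (p i)⟫ + ‖T i (w k) - T i (p i)‖ ^ 2 := by
        rw [hab, norm_sub_sq_real]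
      have h2 : ⟪w k - p i, s - r⟫ = ‖w k - p i‖ ^ 2 - ⟪w k - p i, T i (w k) - T i (p i)⟫ := by
        rw [hab, inner_sub_right, real_inner_self_eq_norm_sq]
      have h3 := hfirm i (w k) (p i)
      linarith
    have hdecomp : ⟪w k, s⟫ = ⟪w k - p i, s - r⟫ + ⟪w k, r⟫ + ⟪p i, s - r⟫ := by
      simp only [inner_sub_left, inner_sub_right]
      ring
    have hb1 : -((‖x‖ + K) * δ) ≤ ⟪w k, r⟫ := by
      have h1 : |⟪w k, r⟫| ≤ ‖w k‖ * ‖r‖ := abs_real_inner_le_norm _ _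
      have h2 : ‖w k‖ ≤ ‖x‖ + K := hwK k (le_of_lt hk)
      have h3 : ‖r‖ ≤ δ := hp i
      have h4 := abs_le.mp h1
      nlinarith [norm_nonneg (w k), norm_nonneg r, norm_nonneg x]
    have hb2 : -(P * ‖s - r‖) ≤ ⟪p i, s - r⟫ := by
      have h1 : |⟪p i, s - r⟫| ≤ ‖p i‖ * ‖s - r‖ := abs_real_inner_le_norm _ _
      have h4 := abs_le.mp h1
      have h5 := hpP i
      nlinarith [norm_nonneg (s - r), norm_nonneg (p i)]
    have hb3 : ‖s‖ ≤ ‖s - r‖ + δ := by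
      calc ‖s‖ = ‖(s - r) + r‖ := by rw [sub_add_cancel]
        _ ≤ ‖s - r‖ + ‖r‖ := norm_add_le _ _
        _ ≤ ‖s - r‖ + δ := by linarith [hp i]
    have hs2 : ‖s‖ ^ 2 ≤ (‖s - r‖ + δ) ^ 2 := by
      nlinarith [norm_nonneg s, norm_nonneg (s - r), hδ.le]
    have hexp : ‖w (k + 1)‖ ^ 2 = ‖w k‖ ^ 2 - 2 * ⟪w k, s⟫ + ‖s‖ ^ 2 := by
      rw [hws, norm_sub_sq_real]
    rw [hCdef]
    nlinarith [sq_nonneg (‖s - r‖ - (P + δ)), norm_nonneg (s - r)]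
  -- iterate the potential estimate
  have hpot : ∀ i, i ≤ m → ‖w i‖ ^ 2 ≤ ‖w 0‖ ^ 2 + i * C := by
    intro i
    induction i with
    | zero => intro _; simp
    | succ k ih =>
      intro hk
      have hkm : k < m := hk
      have h1 := hstep k hkm
      have h2 := ih (le_of_lt hkm)
      push_cast
      push_cast at h2
      linarith
  -- the main inequality
  have hfinal : (1 - lam) * ‖x‖ ^ 2 ≤ 2 * m * δ * ‖x‖ + D := by
    have h1 := hpot m le_rfl
    rw [hwm] at h1
    have h0' : ‖w 0‖ = lam * ‖x‖ := by
      rw [hw0, norm_smul]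
      simp [abs_of_nonneg hlam_nonneg]
    rw [h0'] at h1
    rw [hCdef] at h1
    rw [hDdef, hKdef]
    rw [hKdef] at h1
    nlinarith [sq_nonneg ‖x‖, norm_nonneg x, mul_nonneg (mul_nonneg hlam_nonneg
      (sub_nonneg.mpr hlam_le1)) (sq_nonneg ‖x‖)]
  -- displacement bound
  have hdisp : ‖x - S x‖ ≤ (1 - lam) * ‖x‖ := by
    calc ‖x - S x‖ = ‖S (lam • x) - S x‖ := by rw [hxfix']
      _ ≤ ‖lam • x - x‖ := hSne _ _
      _ = (1 - lam) * ‖x‖ := by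
          have h1 : lam • x - x = (lam - 1) • x := by rw [sub_smul, one_smul]
          rw [h1, norm_smul]
          simp only [Real.norm_eq_abs]
          rw [abs_sub_comm, abs_of_nonneg (by linarith : (0:ℝ) ≤ 1 - lam)]
  clear hstep hpot hwnorm hwK hwsucc hTp hw0 hwm hxfix hxfix' hcontract hSchain hchain_ne hne hfirm h0 hp hpP
  clear_value w f
  clear hwdef hfdef w f
  refine ⟨x, ?_⟩
  have hm2 : (2 : ℝ) ≤ (m : ℝ) := by exact_mod_cast hm
  rcases le_or_gt ((1 - lam) * ‖x‖) ε with hcase | hcase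
  · have h1 : (1 : ℝ) ≤ (m : ℝ) ^ 2 := by nlinarith
    calc ‖x - S x‖ ≤ ε := le_trans hdisp hcase
      _ ≤ (m : ℝ) ^ 2 * ε := by nlinarith
  · have hxpos : 0 < ‖x‖ := by
      by_contra h
      push_neg at h
      have : ‖x‖ = 0 := le_antisymm h (norm_nonneg x)
      rw [this] at hcase
      simp at hcase
      linarith
    have h1lam_pos : 0 < 1 - lam := by
      rcases le_or_gt (1 - lam) 0 with h | h
      · exfalso
        nlinarith [norm_nonneg x]
      · exact h
    -- ε < (1-lam)‖x‖ ≤ (ε²/E)‖x‖, hence E < ε‖x‖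
    have hxbig : E < ε * ‖x‖ := by
      have h1 : ε < (ε ^ 2 / E) * ‖x‖ := by
        calc ε < (1 - lam) * ‖x‖ := hcase
          _ ≤ (ε ^ 2 / E) * ‖x‖ := mul_le_mul_of_nonneg_right hlam_ub (norm_nonneg x)
      rw [div_mul_eq_mul_div, lt_div_iff₀ hEpos] at h1
      have h4 : ε * E < ε * (ε * ‖x‖) := by nlinarith [h1]
      exact lt_of_mul_lt_mul_left h4 hε.le
    have hD_lt : D < ε * ‖x‖ := by
      rw [hEdef] at hxbig
      linarith
    -- divide the main inequality by ‖x‖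
    have h2 : 2 * m * δ = m * ε := by rw [hδdef]; ring
    rw [h2] at hfinal
    have hgoal : (1 - lam) * ‖x‖ ≤ (m + 1) * ε := by
      nlinarith
    have h3 : ((m : ℝ) + 1) * ε ≤ (m : ℝ) ^ 2 * ε := by nlinarith
    calc ‖x - S x‖ ≤ (1 - lam) * ‖x‖ := hdisp
      _ ≤ ((m : ℝ) + 1) * ε := hgoal
      _ ≤ (m : ℝ) ^ 2 * ε := h3
end

section
/- Let X be a real Hilbert space and let S : X → X be strongly nonexpansive. Then S is asymptotically regular if and only if 0 belongs to the closure of the range of Id − S. -/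
open Filter Topology RealInnerProductSpace

theorem strongly_nonexpansive_asymptotically_regular_iff
    {X : Type*} [NormedAddCommGroup X] [InnerProductSpace ℝ X] [CompleteSpace X]
    (S : X → X)
    (hne : ∀ x y : X, ‖S x - S y‖ ≤ ‖x - y‖)
    (hsne : ∀ x y : ℕ → X,
      Bornology.IsBounded (Set.range fun n => x n - y n) →
      Tendsto (fun n => ‖x n - y n‖ - ‖S (x n) - S (y n)‖) atTop (𝓝 0) →
      Tendsto (fun n => (x n - y n) - (S (x n) - S (y n))) atTop (𝓝 0)) :
    (∀ x : X, Tendsto (fun n : ℕ => S^[n] x - S^[n + 1] x) atTop (𝓝 0)) ↔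
      (0 : X) ∈ closure (Set.range fun x : X => x - S x) := by
  have iter_le : ∀ (n : ℕ) (z w : X), ‖S^[n] z - S^[n] w‖ ≤ ‖z - w‖ := by
    intro n
    induction n with
    | zero => simp
    | succ k ih =>
      intro z w
      rw [Function.iterate_succ_apply', Function.iterate_succ_apply']
      exact (hne _ _).trans (ih z w)
  constructor
  · intro h
    refine mem_closure_of_tendsto (h 0) ?_
    refine Eventually.of_forall fun n => ?_
    rw [Function.iterate_succ_apply']
    exact ⟨S^[n] 0, rfl⟩
  · intro h x
    rw [NormedAddCommGroup.tendsto_nhds_zero]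
    intro ε hε
    obtain ⟨z, ⟨y, hy⟩, hzd⟩ := Metric.mem_closure_iff.mp h (ε / 2) (by linarith)
    subst hy
    have hy2 : ‖y - S y‖ < ε / 2 := by
      rw [dist_eq_norm, norm_sub_rev] at hzd; simpa using hzd
    set u : ℕ → X := fun n => S^[n] x with hu
    set v : ℕ → X := fun n => S^[n] y with hv
    -- antitone sequence of norms
    set a : ℕ → ℝ := fun n => ‖u n - v n‖ with ha
    have hanti : Antitone a := by
      refine antitone_nat_of_succ_le fun n => ?_
      show ‖S^[n+1] x - S^[n+1] y‖ ≤ ‖S^[n] x - S^[n] y‖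
      rw [Function.iterate_succ_apply', Function.iterate_succ_apply']
      exact hne _ _
    have hbdd : BddBelow (Set.range a) :=
      ⟨0, by rintro r ⟨n, rfl⟩; exact norm_nonneg _⟩
    have hlim : Tendsto a atTop (𝓝 (⨅ n, a n)) := tendsto_atTop_ciInf hanti hbdd
    have hlim' : Tendsto (fun n => a (n + 1)) atTop (𝓝 (⨅ n, a n)) :=
      hlim.comp (tendsto_add_atTop_nat 1)
    have hdiff : Tendsto (fun n => a n - a (n + 1)) atTop (𝓝 0) := by
      simpa using hlim.sub hlim'
    have hdiff' : Tendsto (fun n => ‖u n - v n‖ - ‖S (u n) - S (v n)‖) atTop (𝓝 0) := by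
      have : (fun n => ‖u n - v n‖ - ‖S (u n) - S (v n)‖) = fun n => a n - a (n + 1) := by
        funext n
        simp only [ha, hu, hv, Function.iterate_succ_apply']
      rw [this]; exact hdiff
    have hb : Bornology.IsBounded (Set.range fun n => u n - v n) := by
      rw [isBounded_iff_forall_norm_le]
      exact ⟨‖x - y‖, by rintro w ⟨n, rfl⟩; exact iter_le n x y⟩
    have hW := hsne u v hb hdiff'
    have hW' : Tendsto (fun n => (u n - u (n + 1)) - (v n - v (n + 1))) atTop (𝓝 0) := by
      have : (fun n => (u n - u (n + 1)) - (v n - v (n + 1)))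
          = fun n => (u n - v n) - (S (u n) - S (v n)) := by
        funext n
        simp only [hu, hv, Function.iterate_succ_apply']
        abel
      rw [this]; exact hW
    have hWnorm : ∀ᶠ n in atTop, ‖(u n - u (n + 1)) - (v n - v (n + 1))‖ < ε / 2 := by
      have := NormedAddCommGroup.tendsto_nhds_zero.mp hW' (ε / 2) (by linarith)
      exact this
    filter_upwards [hWnorm] with n hn
    have hv_small : ‖v n - v (n + 1)‖ < ε / 2 := by
      have : ‖v n - v (n + 1)‖ ≤ ‖y - S y‖ := by
        show ‖S^[n] y - S^[n+1] y‖ ≤ ‖y - S y‖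
        rw [Function.iterate_succ_apply]
        exact iter_le n y (S y)
      linarith
    calc ‖S^[n] x - S^[n + 1] x‖
        = ‖((u n - u (n + 1)) - (v n - v (n + 1))) + (v n - v (n + 1))‖ := by
          simp only [hu]; congr 1; abel
      _ ≤ ‖(u n - u (n + 1)) - (v n - v (n + 1))‖ + ‖v n - v (n + 1)‖ := norm_add_le _ _
      _ < ε / 2 + ε / 2 := add_lt_add hn hv_small
      _ = ε := by ring
end

section
/- Let X be a real Hilbert space, let m ≥ 2, let T_1, …, T_m : X → X be firmly nonexpansive, and set S := T_m T_{m−1} ⋯ T_1. Then S is asymptotically regular if and only if 0 belongs to the closure of the range of Id − S. -/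
open Filter Topology RealInnerProductSpace

lemma aux_norm_add_sq_le {X : Type*} [NormedAddCommGroup X] [InnerProductSpace ℝ X]
    (a b : X) (t : ℝ) (ht : 0 < t) :
    t * ‖a + b‖ ^ 2 ≤ (t + 1) * (t * ‖a‖ ^ 2 + ‖b‖ ^ 2) := by
  have h1 : ‖a + b‖ ^ 2 = ‖a‖ ^ 2 + 2 * ⟪a, b⟫ + ‖b‖ ^ 2 := norm_add_sq_real a b
  have h2 : ⟪a, b⟫ ≤ ‖a‖ * ‖b‖ := real_inner_le_norm a b
  nlinarith [sq_nonneg (t * ‖a‖ - ‖b‖), ht.le,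
    mul_le_mul_of_nonneg_left h2 (by positivity : (0:ℝ) ≤ 2 * t)]

lemma aux_firm_base {X : Type*} [NormedAddCommGroup X] [InnerProductSpace ℝ X]
    (f : X → X) (hf : ∀ x y : X, ‖f x - f y‖ ^ 2 ≤ ⟪x - y, f x - f y⟫) (x y : X) :
    ‖f x - f y‖ ^ 2 + ‖(x - f x) - (y - f y)‖ ^ 2 ≤ ‖x - y‖ ^ 2 := by
  have h1 : (x - f x) - (y - f y) = (x - y) - (f x - f y) := by abel
  rw [h1]
  have h2 : ‖(x - y) - (f x - f y)‖ ^ 2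
      = ‖x - y‖ ^ 2 - 2 * ⟪x - y, f x - f y⟫ + ‖f x - f y‖ ^ 2 := by
    rw [@norm_sub_sq_real]
  have h3 := hf x y
  nlinarith

lemma aux_firm_nonexp {X : Type*} [NormedAddCommGroup X] [InnerProductSpace ℝ X]
    (f : X → X) (hf : ∀ x y : X, ‖f x - f y‖ ^ 2 ≤ ⟪x - y, f x - f y⟫) (x y : X) :
    ‖f x - f y‖ ≤ ‖x - y‖ := by
  have h1 := hf x y
  have h2 : ⟪x - y, f x - f y⟫ ≤ ‖x - y‖ * ‖f x - f y‖ := real_inner_le_norm _ _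
  rcases eq_or_lt_of_le (norm_nonneg (f x - f y)) with h0 | h0
  · rw [← h0]; exact norm_nonneg _
  · have h3 : ‖f x - f y‖ * ‖f x - f y‖ ≤ ‖x - y‖ * ‖f x - f y‖ := by nlinarith
    exact le_of_mul_le_mul_right h3 h0

lemma aux_fold_nonexp {X : Type*} [NormedAddCommGroup X] [InnerProductSpace ℝ X] :
    ∀ L : List (X → X),
      (∀ f ∈ L, ∀ x y : X, ‖f x - f y‖ ^ 2 ≤ ⟪x - y, f x - f y⟫) →
      ∀ x y : X, ‖L.foldl (fun y f => f y) x - L.foldl (fun y f => f y) y‖ ≤ ‖x - y‖ := by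
  intro L
  induction L with
  | nil => intro _ x y; simp
  | cons f L' ih =>
    intro hfirm x y
    simp only [List.foldl_cons]
    exact le_trans (ih (fun g hg => hfirm g (List.mem_cons_of_mem f hg)) (f x) (f y))
      (aux_firm_nonexp f (hfirm f (List.mem_cons_self)) x y)

lemma aux_fold_key {X : Type*} [NormedAddCommGroup X] [InnerProductSpace ℝ X] :
    ∀ L : List (X → X), L ≠ [] →
      (∀ f ∈ L, ∀ x y : X, ‖f x - f y‖ ^ 2 ≤ ⟪x - y, f x - f y⟫) →
      ∀ x y : X,
        ‖L.foldl (fun y f => f y) x - L.foldl (fun y f => f y) y‖ ^ 2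
          + (1 / (L.length : ℝ)) *
            ‖(x - L.foldl (fun y f => f y) x) - (y - L.foldl (fun y f => f y) y)‖ ^ 2
        ≤ ‖x - y‖ ^ 2 := by
  intro L
  induction L with
  | nil => intro h; exact absurd rfl h
  | cons f L' ih =>
    intro _ hfirm x y
    have hbase := aux_firm_base f (hfirm f (List.mem_cons_self)) x y
    rcases eq_or_ne L' [] with rfl | hne
    · simp only [List.foldl_cons, List.foldl_nil, List.length_cons, List.length_nil]
      norm_num
      linarith
    · have hk0 : (0 : ℝ) < (L'.length : ℝ) := by
        have : 0 < L'.length := List.length_pos_iff.mpr hne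
        exact_mod_cast this
      have hih := ih hne (fun g hg => hfirm g (List.mem_cons_of_mem f hg)) (f x) (f y)
      simp only [List.foldl_cons, List.length_cons]
      set F : X → X := fun z => L'.foldl (fun y f => f y) z with hF
      have hFx : L'.foldl (fun y f => f y) (f x) = F (f x) := rfl
      have hFy : L'.foldl (fun y f => f y) (f y) = F (f y) := rfl
      rw [hFx, hFy] at hih ⊢
      set a : X := (x - f x) - (y - f y) with ha
      set b : X := (f x - F (f x)) - (f y - F (f y)) with hb
      have hab : (x - F (f x)) - (y - F (f y)) = a + b := by rw [ha, hb]; abel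
      rw [hab]
      have h4 := aux_norm_add_sq_le a b (L'.length : ℝ) hk0
      set k : ℝ := (L'.length : ℝ) with hkk
      have hcast : ((L'.length + 1 : ℕ) : ℝ) = k + 1 := by push_cast [hkk]; ring
      rw [hcast]
      have h5 : (1 / (k + 1)) * ‖a + b‖ ^ 2 ≤ ‖a‖ ^ 2 + (1 / k) * ‖b‖ ^ 2 := by
        rw [div_mul_eq_mul_div, div_le_iff₀ (by positivity : (0:ℝ) < k + 1), one_mul]
        have hkB : k * ((1 / k) * ‖b‖ ^ 2) = ‖b‖ ^ 2 := by field_simp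
        nlinarith [h4, hkB, hk0]
      linarith

theorem composition_asymptotically_regular_iff
    {X : Type*} [NormedAddCommGroup X] [InnerProductSpace ℝ X] [CompleteSpace X]
    {m : ℕ} (hm : 2 ≤ m) (T : Fin m → X → X)
    (hfirm : ∀ i : Fin m, ∀ x y : X, ‖T i x - T i y‖ ^ 2 ≤ ⟪x - y, T i x - T i y⟫) :
    (∀ x : X,
        Tendsto (fun n : ℕ => (compFold T)^[n] x - (compFold T)^[n + 1] x) atTop (𝓝 0)) ↔
      (0 : X) ∈ closure (Set.range fun x : X => x - compFold T x) := by
  set S := compFold T with hS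
  have hlen : (List.ofFn T).length = m := List.length_ofFn
  have hfirmL : ∀ f ∈ List.ofFn T, ∀ x y : X, ‖f x - f y‖ ^ 2 ≤ ⟪x - y, f x - f y⟫ := by
    intro f hf
    obtain ⟨i, rfl⟩ := List.mem_ofFn.mp hf
    exact hfirm i
  have hm0 : (0 : ℝ) < (m : ℝ) := by
    have : 0 < m := by omega
    exact_mod_cast this
  have hne : List.ofFn T ≠ [] := by
    intro h
    have := congrArg List.length h
    rw [hlen] at this
    simp at this
    omega
  have hkey : ∀ x y : X,
      ‖S x - S y‖ ^ 2 + (1 / (m : ℝ)) * ‖(x - S x) - (y - S y)‖ ^ 2 ≤ ‖x - y‖ ^ 2 := by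
    intro x y
    have h := aux_fold_key (List.ofFn T) hne hfirmL x y
    rw [hlen] at h
    exact h
  have hSne : ∀ a b : X, ‖S a - S b‖ ≤ ‖a - b‖ := by
    intro a b
    exact aux_fold_nonexp (List.ofFn T) hfirmL a b
  have hSiter : ∀ n : ℕ, ∀ a b : X, ‖S^[n] a - S^[n] b‖ ≤ ‖a - b‖ := by
    intro n
    induction n with
    | zero => intro a b; simp
    | succ n ih =>
      intro a b
      rw [Function.iterate_succ_apply', Function.iterate_succ_apply']
      exact le_trans (hSne _ _) (ih a b)
  constructor
  · intro h
    refine mem_closure_of_tendsto (h 0) (Filter.Eventually.of_forall fun n => ?_)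
    exact ⟨S^[n] 0, by simp only []; rw [Function.iterate_succ_apply']⟩
  · intro h x
    rw [Metric.tendsto_atTop]
    intro ε hε
    obtain ⟨z, hz, hzd⟩ := Metric.mem_closure_iff.mp h (ε / 2) (by positivity)
    obtain ⟨y, rfl⟩ := hz
    have hy : ‖y - S y‖ < ε / 2 := by
      rw [norm_sub_rev]
      simpa [dist_eq_norm] using hzd
    set b : ℕ → ℝ :=
      fun n => (1 / (m : ℝ)) * ‖(S^[n] x - S^[n + 1] x) - (S^[n] y - S^[n + 1] y)‖ ^ 2 with hb
    have hstep : ∀ n, ‖S^[n + 1] x - S^[n + 1] y‖ ^ 2 + b n ≤ ‖S^[n] x - S^[n] y‖ ^ 2 := by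
      intro n
      have h1 := hkey (S^[n] x) (S^[n] y)
      rw [hb]
      simp only []
      rw [Function.iterate_succ_apply' S n x, Function.iterate_succ_apply' S n y]
      exact h1
    have hsumkey : ∀ N, ∑ n ∈ Finset.range N, b n + ‖S^[N] x - S^[N] y‖ ^ 2 ≤ ‖x - y‖ ^ 2 := by
      intro N
      induction N with
      | zero => simp
      | succ N ih =>
        rw [Finset.sum_range_succ]
        have := hstep N
        linarith
    have hsum : ∀ N, ∑ n ∈ Finset.range N, b n ≤ ‖x - y‖ ^ 2 := by
      intro N
      have h1 := hsumkey N
      nlinarith [sq_nonneg ‖S^[N] x - S^[N] y‖]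
    have hbnn : ∀ n, 0 ≤ b n := fun n => by positivity
    have hsummable : Summable b := summable_of_sum_range_le hbnn hsum
    have hb0 : Tendsto b atTop (𝓝 0) := hsummable.tendsto_atTop_zero
    have hev : ∀ᶠ n in atTop, b n < (1 / (m : ℝ)) * (ε / 2) ^ 2 :=
      hb0.eventually_lt_const (by positivity)
    obtain ⟨N, hN⟩ := eventually_atTop.mp hev
    refine ⟨N, fun n hn => ?_⟩
    have hbn := hN n hn
    have hd : ‖(S^[n] x - S^[n + 1] x) - (S^[n] y - S^[n + 1] y)‖ < ε / 2 := by
      have h1 : ‖(S^[n] x - S^[n + 1] x) - (S^[n] y - S^[n + 1] y)‖ ^ 2 < (ε / 2) ^ 2 := by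
        rw [hb] at hbn
        simp only [] at hbn
        have h2 : 0 < 1 / (m : ℝ) := by positivity
        nlinarith
      nlinarith [norm_nonneg ((S^[n] x - S^[n + 1] x) - (S^[n] y - S^[n + 1] y)), hε]
    have hyn : ‖S^[n] y - S^[n + 1] y‖ < ε / 2 := by
      have h1 : S^[n + 1] y = S^[n] (S y) := Function.iterate_succ_apply S n y
      rw [h1]
      exact lt_of_le_of_lt (hSiter n y (S y)) hy
    rw [dist_eq_norm, sub_zero]
    calc ‖S^[n] x - S^[n + 1] x‖
        ≤ ‖(S^[n] x - S^[n + 1] x) - (S^[n] y - S^[n + 1] y)‖ + ‖S^[n] y - S^[n + 1] y‖ := by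
          have := norm_sub_le ((S^[n] x - S^[n + 1] x) - (S^[n] y - S^[n + 1] y))
            (-(S^[n] y - S^[n + 1] y))
          simp only [norm_neg] at this
          calc ‖S^[n] x - S^[n + 1] x‖
              = ‖((S^[n] x - S^[n + 1] x) - (S^[n] y - S^[n + 1] y)) + (S^[n] y - S^[n + 1] y)‖ := by
                congr 1; abel
            _ ≤ _ := norm_add_le _ _
      _ < ε / 2 + ε / 2 := by exact add_lt_add hd hyn
      _ = ε := by ring
end

section
/- Let X be a real Hilbert space, let m ≥ 2, let C_1, …, C_m be nonempty closed convex subsets of X, and for each i let P_i : X → X be the metric projection onto C_i, i.e. the map satisfying P_i x ∈ C_i and ⟨x − P_i x, c − P_i x⟩ ≤ 0 for every c ∈ C_i and every x ∈ X. Then the composition P_m P_{m−1} ⋯ P_1 is asymptotically regular. -/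
open Filter Topology RealInnerProductSpace

namespace AsympRegAux

def iterComp {X : Type*} (Q : ℕ → X → X) : ℕ → X → X
  | 0 => id
  | (i+1) => fun y => Q i (iterComp Q i y)

lemma iterComp_congr {X : Type*} {Q Q' : ℕ → X → X} {k : ℕ}
    (h : ∀ i, i < k → Q i = Q' i) (y : X) : iterComp Q k y = iterComp Q' k y := by
  induction k with
  | zero => rfl
  | succ n IH =>
    show Q n (iterComp Q n y) = Q' n (iterComp Q' n y)
    rw [h n (Nat.lt_succ_self n), IH (fun i hi => h i (hi.trans (Nat.lt_succ_self n)))]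

lemma compFold_eq {X : Type*} : ∀ {m : ℕ} (P : Fin m → X → X) (y : X),
    compFold P y = iterComp (fun i => if h : i < m then P ⟨i, h⟩ else id) m y := by
  intro m
  induction m with
  | zero => intro P y; simp [compFold, iterComp]
  | succ n IH =>
    intro P y
    show (List.ofFn P).foldl (fun y f => f y) y = _
    rw [List.ofFn_succ', List.concat_eq_append, List.foldl_append]
    have h1 : (List.ofFn fun i => P i.castSucc).foldl (fun y f => f y) y
        = iterComp (fun i => if h : i < n then P (Fin.castSucc ⟨i, h⟩) else id) n y :=
      IH _ y
    have h2 : iterComp (fun i => if h : i < n then P (Fin.castSucc ⟨i, h⟩) else id) n y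
        = iterComp (fun i => if h : i < n + 1 then P ⟨i, h⟩ else id) n y := by
      apply iterComp_congr
      intro i hi
      rw [dif_pos hi, dif_pos (hi.trans (Nat.lt_succ_self n))]
      rfl
    show P (Fin.last n) ((List.ofFn fun i => P i.castSucc).foldl (fun y f => f y) y)
        = (fun i => if h : i < n + 1 then P ⟨i, h⟩ else id) n
            (iterComp (fun i => if h : i < n + 1 then P ⟨i, h⟩ else id) n y)
    rw [h1, h2]
    simp [Fin.last]

lemma firm_aux {X : Type*} [NormedAddCommGroup X] [InnerProductSpace ℝ X] (a b p q : X)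
    (h1 : ⟪a - p, q - p⟫ ≤ 0) (h2 : ⟪b - q, p - q⟫ ≤ 0) :
    ‖p - q‖ ^ 2 + ‖(a - p) - (b - q)‖ ^ 2 ≤ ‖a - b‖ ^ 2 := by
  have hab : a - b = (p - q) + ((a - p) - (b - q)) := by abel
  have key : ‖a - b‖ ^ 2
      = ‖p - q‖ ^ 2 + 2 * ⟪p - q, (a - p) - (b - q)⟫ + ‖(a - p) - (b - q)‖ ^ 2 := by
    rw [hab, norm_add_sq_real]
  have e : ⟪p - q, (a - p) - (b - q)⟫ = -⟪a - p, q - p⟫ - ⟪b - q, p - q⟫ := by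
    simp only [inner_sub_left, inner_sub_right]
    simp [real_inner_comm]
    ring
  nlinarith [h1, h2, key, e]


section Core
set_option linter.unusedSectionVars false

variable {X : Type*} [NormedAddCommGroup X] [InnerProductSpace ℝ X]
variable (Q : ℕ → X → X) (m : ℕ) (x : X)

/-- `zz n i` : the `i`-th intermediate point of the `n`-th sweep. -/
def zz (n i : ℕ) : X := iterComp Q i ((iterComp Q m)^[n] x)

/-- per-stage displacement -/
def dd (n i : ℕ) : X := zz Q m x n i - zz Q m x n (i + 1)

/-- sweep displacement -/
def vv (n : ℕ) : X := zz Q m x n 0 - zz Q m x (n + 1) 0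

/-- difference of consecutive sweeps at stage `i` -/
def ww (n i : ℕ) : X := zz Q m x n i - zz Q m x (n + 1) i

/-- difference of per-stage displacements of consecutive sweeps -/
def dl (n i : ℕ) : X := dd Q m x n i - dd Q m x (n + 1) i

noncomputable def DD (n : ℕ) : ℝ := ∑ i ∈ Finset.range m, ‖dl Q m x n i‖
noncomputable def SS (n : ℕ) : ℝ := ∑ i ∈ Finset.range m, ‖dl Q m x n i‖ ^ 2
noncomputable def BB (n : ℕ) : ℝ := ∑ i ∈ Finset.range m, ‖dd Q m x n i‖

lemma zz_zero (n : ℕ) : zz Q m x n 0 = (iterComp Q m)^[n] x := rfl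

lemma zz_succ (n i : ℕ) : zz Q m x n (i + 1) = Q i (zz Q m x n i) := rfl

lemma zz_m (n : ℕ) : zz Q m x n m = zz Q m x (n + 1) 0 := by
  show iterComp Q m ((iterComp Q m)^[n] x) = (iterComp Q m)^[n + 1] x
  rw [Function.iterate_succ_apply']

lemma ww_zero (n : ℕ) : ww Q m x n 0 = vv Q m x n := rfl

lemma ww_m (n : ℕ) : ww Q m x n m = vv Q m x (n + 1) := by
  show zz Q m x n m - zz Q m x (n + 1) m = _
  rw [zz_m, zz_m]; rfl

lemma ww_succ (n i : ℕ) :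
    ww Q m x n (i + 1) = ww Q m x n i - dl Q m x n i := by
  simp only [ww, dl, dd]; abel

lemma ww_eq (n : ℕ) : ∀ k, ww Q m x n k = vv Q m x n - ∑ j ∈ Finset.range k, dl Q m x n j := by
  intro k
  induction k with
  | zero => simp [ww_zero]
  | succ k IH => rw [ww_succ, IH, Finset.sum_range_succ]; abel

lemma dd_sum (n : ℕ) : ∑ i ∈ Finset.range m, dd Q m x n i = vv Q m x n := by
  have := Finset.sum_range_sub' (fun i => zz Q m x n i) m
  simp only [dd]
  rw [this, zz_m]; rfl

lemma vv_sub (n : ℕ) : vv Q m x n - vv Q m x (n + 1) = ∑ j ∈ Finset.range m, dl Q m x n j := by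
  have := ww_eq Q m x n m
  rw [ww_m] at this
  rw [this]; abel

end Core

section Analytic
set_option linter.unusedSectionVars false

variable {X : Type*} [NormedAddCommGroup X] [InnerProductSpace ℝ X]
variable (Q : ℕ → X → X) (m : ℕ) (x : X)
variable (hQ : ∀ i, i < m → ∀ a b : X, ⟪a - Q i a, Q i b - Q i a⟫ ≤ 0)

include hQ

lemma firm_step (n i : ℕ) (hi : i < m) :
    ‖ww Q m x n (i + 1)‖ ^ 2 + ‖dl Q m x n i‖ ^ 2 ≤ ‖ww Q m x n i‖ ^ 2 := by
  have h := firm_aux (zz Q m x n i) (zz Q m x (n + 1) i)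
    (Q i (zz Q m x n i)) (Q i (zz Q m x (n + 1) i))
    (hQ i hi _ _) (hQ i hi _ _)
  simpa only [ww, dl, dd, zz_succ] using h

lemma chain (n : ℕ) : ‖vv Q m x (n + 1)‖ ^ 2 + SS Q m x n ≤ ‖vv Q m x n‖ ^ 2 := by
  have main : ∀ k, k ≤ m →
      ‖ww Q m x n k‖ ^ 2 + ∑ j ∈ Finset.range k, ‖dl Q m x n j‖ ^ 2
        ≤ ‖ww Q m x n 0‖ ^ 2 := by
    intro k
    induction k with
    | zero => intro _; simp
    | succ k IH =>
      intro hk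
      have hk' : k < m := hk
      have h1 := firm_step Q m x hQ n k hk'
      have h2 := IH (le_of_lt hk')
      rw [Finset.sum_range_succ]
      linarith
  have := main m le_rfl
  rw [ww_m, ww_zero] at this
  simpa [SS] using this

lemma v_antitone (n : ℕ) : ‖vv Q m x (n + 1)‖ ≤ ‖vv Q m x n‖ := by
  have h := chain Q m x hQ n
  have hS : 0 ≤ SS Q m x n := Finset.sum_nonneg (fun i _ => by positivity)
  nlinarith [norm_nonneg (vv Q m x (n + 1)), norm_nonneg (vv Q m x n)]

lemma v_le0 (n : ℕ) : ‖vv Q m x n‖ ≤ ‖vv Q m x 0‖ := by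
  induction n with
  | zero => exact le_refl _
  | succ n IH => exact le_trans (v_antitone Q m x hQ n) IH

lemma SS_sum (N : ℕ) : ∑ n ∈ Finset.range N, SS Q m x n ≤ ‖vv Q m x 0‖ ^ 2 := by
  have main : ∀ N, ∑ n ∈ Finset.range N, SS Q m x n
      ≤ ‖vv Q m x 0‖ ^ 2 - ‖vv Q m x N‖ ^ 2 := by
    intro N
    induction N with
    | zero => simp
    | succ N IH =>
      rw [Finset.sum_range_succ]
      have := chain Q m x hQ N
      linarith
  have := main N
  nlinarith [norm_nonneg (vv Q m x N)]

end Analytic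

section Analytic2
set_option linter.unusedSectionVars false

variable {X : Type*} [NormedAddCommGroup X] [InnerProductSpace ℝ X]
variable (Q : ℕ → X → X) (m : ℕ) (x : X)
variable (hQ : ∀ i, i < m → ∀ a b : X, ⟪a - Q i a, Q i b - Q i a⟫ ≤ 0)

include hQ

lemma key_ineq (n : ℕ) :
    ‖vv Q m x (n + 1)‖ ^ 2 ≤ (‖vv Q m x 0‖ + BB Q m x (n + 1)) * DD Q m x n := by
  have hDD : (0:ℝ) ≤ DD Q m x n := Finset.sum_nonneg fun i _ => norm_nonneg _
  have hterm : ∀ i ∈ Finset.range m,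
      ⟪dd Q m x (n + 1) i, vv Q m x n⟫ ≤ ‖dd Q m x (n + 1) i‖ * DD Q m x n := by
    intro i hi
    have hi' : i < m := Finset.mem_range.mp hi
    have split : ⟪dd Q m x (n + 1) i, vv Q m x n⟫
        = ⟪dd Q m x (n + 1) i, ww Q m x n (i + 1)⟫
          + ⟪dd Q m x (n + 1) i, vv Q m x n - ww Q m x n (i + 1)⟫ := by
      rw [← inner_add_right]
      congr 1
      abel
    have h1 : ⟪dd Q m x (n + 1) i, ww Q m x n (i + 1)⟫ ≤ 0 := by
      have := hQ i hi' (zz Q m x (n + 1) i) (zz Q m x n i)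
      simpa only [dd, ww, zz_succ] using this
    have h2 : ⟪dd Q m x (n + 1) i, vv Q m x n - ww Q m x n (i + 1)⟫
        ≤ ‖dd Q m x (n + 1) i‖ * DD Q m x n := by
      have heq : vv Q m x n - ww Q m x n (i + 1)
          = ∑ j ∈ Finset.range (i + 1), dl Q m x n j := by
        rw [ww_eq]; abel
      refine le_trans (real_inner_le_norm _ _) ?_
      refine mul_le_mul_of_nonneg_left ?_ (norm_nonneg _)
      rw [heq]
      refine le_trans (norm_sum_le _ _) ?_
      exact Finset.sum_le_sum_of_subset_of_nonneg
        (Finset.range_subset_range.mpr hi') (fun j _ _ => norm_nonneg _)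
    linarith
  have hsum : ⟪vv Q m x (n + 1), vv Q m x n⟫ ≤ BB Q m x (n + 1) * DD Q m x n := by
    rw [← dd_sum Q m x (n + 1), sum_inner]
    refine le_trans (Finset.sum_le_sum hterm) ?_
    rw [BB, Finset.sum_mul]
  have hvdiff : ‖vv Q m x (n + 1) - vv Q m x n‖ ≤ DD Q m x n := by
    rw [norm_sub_rev, vv_sub]
    exact le_trans (norm_sum_le _ _) le_rfl
  have hsq : ‖vv Q m x (n + 1)‖ ^ 2
      = ⟪vv Q m x (n + 1), vv Q m x n⟫
        + ⟪vv Q m x (n + 1), vv Q m x (n + 1) - vv Q m x n⟫ := by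
    rw [← real_inner_self_eq_norm_sq, ← inner_add_right]
    congr 1
    abel
  have h3 : ⟪vv Q m x (n + 1), vv Q m x (n + 1) - vv Q m x n⟫ ≤ ‖vv Q m x 0‖ * DD Q m x n :=
    le_trans (real_inner_le_norm _ _)
      (mul_le_mul (v_le0 Q m x hQ (n + 1)) hvdiff (norm_nonneg _) (norm_nonneg _))
  nlinarith [hsum, h3, hsq]

omit hQ

lemma BB_bound (n : ℕ) :
    BB Q m x (n + 1) ≤ BB Q m x 0 + ∑ k ∈ Finset.range (n + 1), DD Q m x k := by
  have hstep : ∀ k i, ‖dd Q m x (k + 1) i‖ ≤ ‖dd Q m x k i‖ + ‖dl Q m x k i‖ := by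
    intro k i
    have : dd Q m x (k + 1) i = dd Q m x k i - dl Q m x k i := by simp [dl]
    rw [this]
    exact norm_sub_le _ _
  have hd : ∀ n i, ‖dd Q m x (n + 1) i‖
      ≤ ‖dd Q m x 0 i‖ + ∑ k ∈ Finset.range (n + 1), ‖dl Q m x k i‖ := by
    intro n i
    induction n with
    | zero => simpa using hstep 0 i
    | succ n IH =>
      rw [Finset.sum_range_succ]
      have := hstep (n + 1) i
      linarith
  calc BB Q m x (n + 1)
      ≤ ∑ i ∈ Finset.range m,
          (‖dd Q m x 0 i‖ + ∑ k ∈ Finset.range (n + 1), ‖dl Q m x k i‖) :=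
        Finset.sum_le_sum fun i _ => hd n i
    _ = BB Q m x 0 + ∑ i ∈ Finset.range m, ∑ k ∈ Finset.range (n + 1), ‖dl Q m x k i‖ := by
        rw [Finset.sum_add_distrib]; rfl
    _ = BB Q m x 0 + ∑ k ∈ Finset.range (n + 1), DD Q m x k := by
        rw [Finset.sum_comm]; rfl

lemma DD_sq (n : ℕ) : DD Q m x n ^ 2 ≤ (m : ℝ) * SS Q m x n := by
  have := sq_sum_le_card_mul_sum_sq (s := Finset.range m) (f := fun i => ‖dl Q m x n i‖)
  simp only [Finset.card_range] at this
  exact this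

include hQ

lemma DD_sq_sum (N : ℕ) :
    ∑ n ∈ Finset.range N, DD Q m x n ^ 2 ≤ (m : ℝ) * ‖vv Q m x 0‖ ^ 2 := by
  calc ∑ n ∈ Finset.range N, DD Q m x n ^ 2
      ≤ ∑ n ∈ Finset.range N, (m : ℝ) * SS Q m x n :=
        Finset.sum_le_sum fun n _ => DD_sq Q m x n
    _ = (m : ℝ) * ∑ n ∈ Finset.range N, SS Q m x n := by rw [Finset.mul_sum]
    _ ≤ (m : ℝ) * ‖vv Q m x 0‖ ^ 2 :=
        mul_le_mul_of_nonneg_left (SS_sum Q m x hQ N) (by positivity)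

lemma GG_sq (n : ℕ) :
    (∑ k ∈ Finset.range (n + 1), DD Q m x k) ^ 2
      ≤ ((n : ℝ) + 1) * ((m : ℝ) * ‖vv Q m x 0‖ ^ 2) := by
  have h1 := sq_sum_le_card_mul_sum_sq (s := Finset.range (n + 1)) (f := fun k => DD Q m x k)
  have h2 := DD_sq_sum Q m x hQ (n + 1)
  have hc : ((Finset.range (n + 1)).card : ℝ) = (n : ℝ) + 1 := by
    simp [Finset.card_range]
  rw [hc] at h1
  exact le_trans h1 (mul_le_mul_of_nonneg_left h2 (by positivity))

end Analytic2

lemma main_aux {X : Type*} [NormedAddCommGroup X] [InnerProductSpace ℝ X]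
    (Q : ℕ → X → X) (m : ℕ) (x : X)
    (hQ : ∀ i, i < m → ∀ a b : X, ⟪a - Q i a, Q i b - Q i a⟫ ≤ 0) :
    Tendsto (fun n : ℕ => (iterComp Q m)^[n] x - (iterComp Q m)^[n + 1] x) atTop (𝓝 0) := by
  have hveq : (fun n : ℕ => (iterComp Q m)^[n] x - (iterComp Q m)^[n + 1] x) = vv Q m x := rfl
  rw [hveq, tendsto_zero_iff_norm_tendsto_zero]
  have hexists : ∀ ε : ℝ, 0 < ε → ∃ N, ‖vv Q m x N‖ < ε := by
    intro ε hε
    by_contra h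
    push_neg at h
    set A := ‖vv Q m x 0‖ + BB Q m x 0 with hA
    have hBB0 : (0:ℝ) ≤ BB Q m x 0 := Finset.sum_nonneg fun i _ => norm_nonneg _
    have hv0pos : 0 < ‖vv Q m x 0‖ := lt_of_lt_of_le hε (h 0)
    have hApos : 0 < A := by linarith
    set K := 2 * A ^ 2 + 2 * (m : ℝ) * ‖vv Q m x 0‖ ^ 2 with hK
    have hKpos : 0 < K := by positivity
    have hmain : ∀ n : ℕ, ε ^ 4 * (1 / ((n : ℝ) + 1)) ≤ K * DD Q m x n ^ 2 := by
      intro n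
      have hDD : (0:ℝ) ≤ DD Q m x n := Finset.sum_nonneg fun i _ => norm_nonneg _
      have hkey := key_ineq Q m x hQ n
      have hBb := BB_bound Q m x n
      set G := ∑ k ∈ Finset.range (n + 1), DD Q m x k with hG
      have hGnn : (0:ℝ) ≤ G := Finset.sum_nonneg fun i _ =>
        Finset.sum_nonneg fun j _ => norm_nonneg _
      have h1 : ε ^ 2 ≤ (A + G) * DD Q m x n := by
        have hε2 : ε ^ 2 ≤ ‖vv Q m x (n + 1)‖ ^ 2 := by nlinarith [h (n + 1)]
        have h2 : ‖vv Q m x 0‖ + BB Q m x (n + 1) ≤ A + G := by linarith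
        have := mul_le_mul_of_nonneg_right h2 hDD
        linarith
      have hGsq := GG_sq Q m x hQ n
      have h3 : (A + G) ^ 2 ≤ K * ((n : ℝ) + 1) := by
        nlinarith [hGsq, sq_nonneg (A - G), sq_nonneg A, Nat.cast_nonneg (α := ℝ) n]
      have hAG : (0:ℝ) ≤ A + G := by linarith
      have h4 : ε ^ 4 ≤ K * ((n : ℝ) + 1) * DD Q m x n ^ 2 := by
        have hsq : ε ^ 2 * ε ^ 2 ≤ ((A + G) * DD Q m x n) * ((A + G) * DD Q m x n) :=
          mul_self_le_mul_self (by positivity) h1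
        have h5 : (A + G) ^ 2 * DD Q m x n ^ 2 ≤ K * ((n : ℝ) + 1) * DD Q m x n ^ 2 :=
          mul_le_mul_of_nonneg_right h3 (by positivity)
        nlinarith [hsq, h5]
      have hn1pos : (0:ℝ) < (n : ℝ) + 1 := by positivity
      rw [mul_one_div, div_le_iff₀ hn1pos]
      calc ε ^ 4 ≤ K * ((n : ℝ) + 1) * DD Q m x n ^ 2 := h4
        _ = K * DD Q m x n ^ 2 * ((n : ℝ) + 1) := by ring
    have hsumN : ∀ N : ℕ, ε ^ 4 * (∑ n ∈ Finset.range N, (1 / ((n : ℝ) + 1)))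
        ≤ K * ((m : ℝ) * ‖vv Q m x 0‖ ^ 2) := by
      intro N
      calc ε ^ 4 * (∑ n ∈ Finset.range N, (1 / ((n : ℝ) + 1)))
          = ∑ n ∈ Finset.range N, ε ^ 4 * (1 / ((n : ℝ) + 1)) := Finset.mul_sum _ _ _
        _ ≤ ∑ n ∈ Finset.range N, K * DD Q m x n ^ 2 :=
            Finset.sum_le_sum fun n _ => hmain n
        _ = K * ∑ n ∈ Finset.range N, DD Q m x n ^ 2 := (Finset.mul_sum _ _ _).symm
        _ ≤ K * ((m : ℝ) * ‖vv Q m x 0‖ ^ 2) :=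
            mul_le_mul_of_nonneg_left (DD_sq_sum Q m x hQ N) hKpos.le
    have hdiv := Real.tendsto_sum_range_one_div_nat_succ_atTop
    have hε4 : (0:ℝ) < ε ^ 4 := by positivity
    obtain ⟨N, hN⟩ :=
      (hdiv.eventually_gt_atTop (K * ((m : ℝ) * ‖vv Q m x 0‖ ^ 2) / ε ^ 4)).exists
    rw [div_lt_iff₀ hε4] at hN
    have := hsumN N
    nlinarith [hN, this]
  rw [Metric.tendsto_atTop]
  intro ε hε
  obtain ⟨N, hN⟩ := hexists ε hε
  refine ⟨N, fun n hn => ?_⟩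
  rw [Real.dist_eq, sub_zero, abs_of_nonneg (norm_nonneg _)]
  have hanti : Antitone fun n => ‖vv Q m x n‖ :=
    antitone_nat_of_succ_le (v_antitone Q m x hQ)
  exact lt_of_le_of_lt (hanti hn) hN

end AsympRegAux

theorem composition_of_projections_asymptotically_regular
    {X : Type*} [NormedAddCommGroup X] [InnerProductSpace ℝ X] [CompleteSpace X]
    {m : ℕ} (hm : 2 ≤ m) (C : Fin m → Set X)
    (hCne : ∀ i, (C i).Nonempty) (hCcl : ∀ i, IsClosed (C i)) (hCcv : ∀ i, Convex ℝ (C i))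
    (P : Fin m → X → X)
    (hP : ∀ i : Fin m, ∀ x : X, P i x ∈ C i ∧ ∀ c ∈ C i, ⟪x - P i x, c - P i x⟫ ≤ 0) :
    ∀ x : X,
      Tendsto (fun n : ℕ => (compFold P)^[n] x - (compFold P)^[n + 1] x) atTop (𝓝 0) := by
  intro x
  set Q : ℕ → X → X := fun i => if h : i < m then P ⟨i, h⟩ else id with hQdef
  have hfun : compFold P = AsympRegAux.iterComp Q m :=
    funext fun y => AsympRegAux.compFold_eq P y
  rw [hfun]
  apply AsympRegAux.main_aux
  intro i hi a b
  have hQi : Q i = P ⟨i, hi⟩ := by rw [hQdef]; exact dif_pos hi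
  rw [hQi]
  exact (hP ⟨i, hi⟩ a).2 _ (hP ⟨i, hi⟩ b).1
end

section
/- Let X be a real Hilbert space, let m ≥ 2, and let T_1, …, T_m : X → X be firmly nonexpansive mappings such that for each i, 0 belongs to the closure of the range of Id − T_i. Let T : X^m → X^m be the product operator T(x_1, …, x_m) = (T_1 x_1, …, T_m x_m). Then T is asymptotically regular on the Hilbert product space X^m. -/
open Filter Topology RealInnerProductSpace

private lemma firmly_asymp_reg
    {X : Type*} [NormedAddCommGroup X] [InnerProductSpace ℝ X]
    (T : X → X)
    (hfirm : ∀ x y : X, ‖T x - T y‖ ^ 2 ≤ ⟪x - y, T x - T y⟫)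
    (h0 : (0 : X) ∈ closure (Set.range fun x : X => x - T x)) :
    ∀ x : X, Tendsto (fun n : ℕ => T^[n] x - T^[n + 1] x) atTop (𝓝 0) := by
  have hne : ∀ x y : X, ‖T x - T y‖ ≤ ‖x - y‖ := by
    intro x y
    rcases eq_or_lt_of_le (norm_nonneg (T x - T y)) with h | h
    · rw [← h]; exact norm_nonneg _
    · have := (hfirm x y).trans (real_inner_le_norm _ _)
      rw [sq] at this
      exact le_of_mul_le_mul_right this h
  have hkey : ∀ x y : X,
      ‖(x - T x) - (y - T y)‖ ^ 2 ≤ ‖x - y‖ ^ 2 - ‖T x - T y‖ ^ 2 := by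
    intro x y
    have h1 : (x - T x) - (y - T y) = (x - y) - (T x - T y) := by abel
    rw [h1, norm_sub_sq_real]
    have := hfirm x y
    nlinarith [hfirm x y]
  intro x
  rw [NormedAddCommGroup.tendsto_nhds_zero]
  intro ε hε
  have hε2 : 0 < ε / 2 := half_pos hε
  obtain ⟨z, hz, hzn⟩ := Metric.mem_closure_iff.mp h0 (ε / 2) hε2
  obtain ⟨y, rfl⟩ := hz
  rw [dist_comm, dist_zero_right] at hzn
  change ‖y - T y‖ < ε / 2 at hzn
  -- hzn : ‖y - T y‖ < ε / 2
  set e : ℕ → X := fun n => T^[n] x - T^[n + 1] x with he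
  set f : ℕ → X := fun n => T^[n] y - T^[n + 1] y with hf
  have hit : ∀ (w : X) n, T^[n + 1] w = T (T^[n] w) := by
    intro w n; rw [Function.iterate_succ_apply']
  have hstep : ∀ k, ‖f (k + 1)‖ ≤ ‖f k‖ := by
    intro k
    have h1 : f (k + 1) = T (T^[k] y) - T (T (T^[k] y)) := by
      simp [hf, Function.iterate_succ_apply']
    have h2 : f k = T^[k] y - T (T^[k] y) := by
      simp [hf, Function.iterate_succ_apply']
    rw [h1, h2]
    exact hne _ _
  have hfdec : ∀ n, ‖f n‖ ≤ ‖y - T y‖ := by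
    intro n
    induction n with
    | zero => simp [hf]
    | succ n ih => exact (hstep n).trans ih
  have htel : ∀ n, ‖e n - f n‖ ^ 2 ≤
      ‖T^[n] x - T^[n] y‖ ^ 2 - ‖T^[n + 1] x - T^[n + 1] y‖ ^ 2 := by
    intro n
    have := hkey (T^[n] x) (T^[n] y)
    rw [← hit, ← hit] at this
    exact this
  have hsum : ∀ N, ∑ n ∈ Finset.range N, ‖e n - f n‖ ^ 2 ≤ ‖x - y‖ ^ 2 := by
    intro N
    have : ∑ n ∈ Finset.range N, ‖e n - f n‖ ^ 2 ≤
        ∑ n ∈ Finset.range N,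
          (‖T^[n] x - T^[n] y‖ ^ 2 - ‖T^[n + 1] x - T^[n + 1] y‖ ^ 2) :=
      Finset.sum_le_sum fun n _ => htel n
    rw [Finset.sum_range_sub' (fun n => ‖T^[n] x - T^[n] y‖ ^ 2)] at this
    simp only [Function.iterate_zero_apply] at this
    nlinarith [sq_nonneg ‖T^[N] x - T^[N] y‖]
  have hsummable : Summable (fun n => ‖e n - f n‖ ^ 2) :=
    summable_of_sum_range_le (fun n => sq_nonneg _) hsum
  have htend := hsummable.tendsto_atTop_zero
  have hev : ∀ᶠ n in atTop, ‖e n - f n‖ ^ 2 < (ε / 2) ^ 2 :=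
    htend.eventually_lt_const (by positivity)
  filter_upwards [hev] with n hn
  have h1 : ‖e n - f n‖ < ε / 2 := lt_of_pow_lt_pow_left₀ 2 hε2.le hn
  calc ‖e n‖ = ‖(e n - f n) + f n‖ := by rw [sub_add_cancel]
    _ ≤ ‖e n - f n‖ + ‖f n‖ := norm_add_le _ _
    _ < ε / 2 + ε / 2 := add_lt_add h1 ((hfdec n).trans_lt hzn)
    _ = ε := add_halves ε

theorem product_operator_asymptotically_regular
    {X : Type*} [NormedAddCommGroup X] [InnerProductSpace ℝ X] [CompleteSpace X]
    {m : ℕ} (hm : 2 ≤ m) (T : Fin m → X → X)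
    (hfirm : ∀ i : Fin m, ∀ x y : X, ‖T i x - T i y‖ ^ 2 ≤ ⟪x - y, T i x - T i y⟫)
    (h0 : ∀ i : Fin m, (0 : X) ∈ closure (Set.range fun x : X => x - T i x))
    (Tb : PiLp 2 (fun _ : Fin m => X) → PiLp 2 (fun _ : Fin m => X))
    (hTb : ∀ x : PiLp 2 (fun _ : Fin m => X), ∀ i : Fin m, Tb x i = T i (x i)) :
    ∀ x : PiLp 2 (fun _ : Fin m => X),
      Tendsto (fun n : ℕ => Tb^[n] x - Tb^[n + 1] x) atTop (𝓝 0) := by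
  intro x
  have hcoord : ∀ (n : ℕ) (i : Fin m), Tb^[n] x i = (T i)^[n] (x i) := by
    intro n
    induction n with
    | zero => intro i; simp
    | succ n ih =>
      intro i
      rw [Function.iterate_succ_apply', Function.iterate_succ_apply', hTb, ih]
  -- transfer to product topology
  have hhom : Continuous ((WithLp.equiv 2 (∀ _ : Fin m, X)).symm) :=
    PiLp.continuous_toLp 2 _
  have hpi : Tendsto (fun n : ℕ => (fun i => (T i)^[n] (x i) - (T i)^[n + 1] (x i)))
      atTop (𝓝 (0 : ∀ _ : Fin m, X)) := by
    rw [tendsto_pi_nhds]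
    intro i
    exact firmly_asymp_reg (T i) (hfirm i) (h0 i) (x i)
  have := (hhom.tendsto 0).comp hpi
  simp only [map_zero] at this
  have heq : (fun n : ℕ => Tb^[n] x - Tb^[n + 1] x) =
      fun n => (WithLp.equiv 2 (∀ _ : Fin m, X)).symm
        (fun i => (T i)^[n] (x i) - (T i)^[n + 1] (x i)) := by
    funext n
    apply (WithLp.equiv 2 (∀ _ : Fin m, X)).injective
    funext i
    simp only [WithLp.equiv_apply, WithLp.equiv_symm_apply]
    show (Tb^[n] x - Tb^[n + 1] x) i = _
    rw [PiLp.sub_apply, hcoord, hcoord]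
  rw [heq]
  exact this
end
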